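/- arXiv:2002.05392 — 11 statements merged into one kernel-verified Lean document; each statement's English description precedes it below -/
import Mathlib

section
/- Let n ≥ 1 and let x ∈ ℝ^n. Then max over all nonempty subsets A ⊆ {1,…,n} of (1/|A|)·(∑_{i∈A} |x_i|)² is at least (1/(1+ln n))·∑_{i=1}^n x_i². Equivalently, there exists a nonempty subset A ⊆ {1,…,n} such that (∑_{i∈A} |x_i|)² ≥ (|A|/(1+ln n))·‖x‖₂². -/
/-!
Sort the `|x i|` decreasingly as `a₀ ≥ a₁ ≥ ⋯` and let `M` be the largest value of
`(∑_{i∈A} |x i|)² / |A|`. Testing `M` on the set of the `k + 1` largest coordinates gives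
`(k + 1) aₖ ≤ ∑_{j ≤ k} aⱼ ≤ √((k + 1) M)`, i.e. `aₖ² ≤ M / (k + 1)`; summing over `k` yields
`‖x‖₂² ≤ M · Hₙ ≤ M (1 + log n)`.
-/

open Finset

lemma Fin.exists_perm_antitone {α : Type*} [LinearOrder α] {n : ℕ} (f : Fin n → α) :
    ∃ σ : Equiv.Perm (Fin n), Antitone (f ∘ σ) :=
  ⟨Tuple.sort (OrderDual.toDual ∘ f), Tuple.monotone_sort (OrderDual.toDual ∘ f)⟩

lemma sq_le_div_card_of_forall_le {ι : Type*} {s : Finset ι} {a : ι → ℝ} {t M : ℝ}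
    (hs : s.Nonempty) (ht : 0 ≤ t) (hta : ∀ j ∈ s, t ≤ a j)
    (hM : (∑ j ∈ s, a j) ^ 2 ≤ M * #s) : t ^ 2 ≤ M / #s := by
  have hcard : (0 : ℝ) < #s := by exact_mod_cast hs.card_pos
  have hsum : #s * t ≤ ∑ j ∈ s, a j := by
    simpa using Finset.card_nsmul_le_sum s a t hta
  rw [le_div_iff₀ hcard]
  nlinarith [mul_self_le_mul_self (by positivity) hsum]

lemma harmonic_eq_sum_fin (n : ℕ) : (harmonic n : ℝ) = ∑ k : Fin n, 1 / ((k : ℝ) + 1) := by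
  rw [Fin.sum_univ_eq_sum_range (fun k => 1 / ((k : ℝ) + 1)), harmonic]
  push_cast
  simp [one_div]

lemma sum_sq_le_mul_harmonic {n : ℕ} (x : Fin n → ℝ) {M : ℝ}
    (hM : ∀ A : Finset (Fin n), A.Nonempty → (∑ i ∈ A, |x i|) ^ 2 ≤ M * #A) :
    ∑ i, x i ^ 2 ≤ M * harmonic n := by
  obtain ⟨σ, hσ⟩ := Fin.exists_perm_antitone (fun i => |x i|)
  have hrank (k : Fin n) : x (σ k) ^ 2 ≤ M / ((k : ℝ) + 1) := by
    have hcard : #((Iic k).map σ.toEmbedding) = (k : ℝ) + 1 := by simp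
    rw [← sq_abs, ← hcard]
    refine sq_le_div_card_of_forall_le ⟨σ k, by simp⟩ (abs_nonneg _) ?_ (hM _ ⟨σ k, by simp⟩)
    simp only [mem_map_equiv, mem_Iic]
    intro j hj
    simpa using hσ hj
  calc ∑ i, x i ^ 2 = ∑ k, x (σ k) ^ 2 := (Equiv.sum_comp σ _).symm
    _ ≤ ∑ k : Fin n, M / ((k : ℝ) + 1) := sum_le_sum fun k _ => hrank k
    _ = M * harmonic n := by simp only [harmonic_eq_sum_fin, mul_sum, mul_one_div]

lemma exists_nonempty_maximizing_sq_sum_div_card {ι : Type*} [Fintype ι] [Nonempty ι]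
    (a : ι → ℝ) :
    ∃ A : Finset ι, A.Nonempty ∧
      ∀ B : Finset ι, B.Nonempty → (∑ i ∈ B, a i) ^ 2 ≤ (∑ i ∈ A, a i) ^ 2 / #A * #B := by
  obtain ⟨A, hA, hmax⟩ := (univ.filter (Finset.Nonempty (α := ι))).exists_max_image
    (fun A => (∑ i ∈ A, a i) ^ 2 / #A) ⟨univ, by simp⟩
  refine ⟨A, (mem_filter.mp hA).2, fun B hB => ?_⟩
  rw [← div_le_iff₀ (by exact_mod_cast hB.card_pos)]
  exact hmax B (by simpa using hB)

/-- For any `x ∈ ℝⁿ` (n ≥ 1), there exists a nonempty subset `A ⊆ {1,…,n}` such that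
`(∑_{i∈A} |x_i|)² ≥ (|A|/(1+ln n)) · ∑_i x_i²`. -/
theorem norm_one_sq_subset_ge_log_norm_two_sq (n : ℕ) (hn : 1 ≤ n) (x : Fin n → ℝ) :
    ∃ A : Finset (Fin n), A.Nonempty ∧
      (∑ i ∈ A, |x i|) ^ 2 ≥ (A.card : ℝ) / (1 + Real.log n) * ∑ i, (x i) ^ 2 := by
  have : Nonempty (Fin n) := ⟨⟨0, hn⟩⟩
  obtain ⟨A, hA, hmax⟩ := exists_nonempty_maximizing_sq_sum_div_card (fun i => |x i|)
  set M := (∑ i ∈ A, |x i|) ^ 2 / #A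
  have hsum : ∑ i, x i ^ 2 ≤ M * (1 + Real.log n) :=
    (sum_sq_le_mul_harmonic x hmax).trans
      (mul_le_mul_of_nonneg_left (harmonic_le_one_add_log n) (by positivity))
  refine ⟨A, hA, ?_⟩
  calc (#A : ℝ) / (1 + Real.log n) * ∑ i, x i ^ 2
      ≤ #A / (1 + Real.log n) * (M * (1 + Real.log n)) := by gcongr
    _ = (∑ i ∈ A, |x i|) ^ 2 := by simp only [M]; field_simp
end

section
/- Let n ≥ 1, let p ∈ ℝ^n satisfy 0 < p_1 ≤ p_2 ≤ ⋯ ≤ p_n < 1, and let g ∈ ℝ^n. Then γ̃²(p,g) ≥ γ₁²(p,g) / (3 + ln(1/p_1) + ln(1/(1−p_n))) -/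
/-!
Let `U` be uniform on `[0, 1]` and `X = ∑ᵢ gᵢ 1{U ≤ pᵢ}`; then `γ̃²(p, g) = Var X`. Put `q₀ = 0`,
`qₖ = pₖ` and `qₙ₊₁ = 1`: `X` equals `Tₖ = ∑_{i > k} gᵢ` on `(qₖ, qₖ₊₁]`. With
`σ(t) = √(t(1-t))`, which vanishes at `0` and `1`, Abel summation gives
`∑ σ(pᵢ) gᵢ = ∑ₖ (σ(qₖ₊₁) - σ(qₖ)) (Tₖ - 𝔼X)`, and Cauchy–Schwarz bounds its square by
`Var X · ∑ₖ (σ(qₖ₊₁) - σ(qₖ))² / (qₖ₊₁ - qₖ)`. The two boundary terms are `1 - p₁` and `pₙ`; an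
interior term is at most the increment of `(log t - log (1 - t)) / 4`, whose derivative
`1 / (4t(1-t))` dominates `σ'²`, and these increments telescope.
-/

open Finset

theorem two_mul_sub_div_add_le_log_sub_log {x y : ℝ} (hx : 0 < x) (hxy : x ≤ y) :
    2 * (y - x) / (y + x) ≤ Real.log y - Real.log x := by
  set a := y / x - 1
  have ha : 0 ≤ a := by rw [sub_nonneg, one_le_div hx]; exact hxy
  have hsum := Real.hasSum_log_one_add ha
  have hfirst := le_hasSum hsum 0 fun j _ ↦ by positivity
  have hlog : Real.log (1 + a) = Real.log y - Real.log x := by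
    rw [add_sub_cancel, Real.log_div (by linarith) hx.ne']
  have hterm : 2 * (1 / (2 * ((0 : ℕ) : ℝ) + 1)) * (a / (a + 2)) ^ (2 * 0 + 1)
      = 2 * (y - x) / (y + x) := by
    simp only [a]; field_simp; ring
  rwa [hterm, hlog] at hfirst

theorem sum_sum_eq_sum_add_two_mul_sum_lt {α R : Type*} [LinearOrder α] [CommSemiring R]
    (s : Finset α) (r : α → α → R) (hr : ∀ i j, r i j = r j i) :
    ∑ i ∈ s, ∑ j ∈ s, r i j = ∑ i ∈ s, r i i + 2 * ∑ i ∈ s, ∑ j ∈ s with i < j, r i j := by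
  have hsplit : ∀ i ∈ s, ∑ j ∈ s, r i j
      = ∑ j ∈ s with j < i, r i j + r i i + ∑ j ∈ s with i < j, r i j := by
    intro i hi
    rw [← sum_filter_add_sum_filter_not s (· < i), add_assoc]
    congr 1
    rw [← sum_filter_add_sum_filter_not _ (i < ·), filter_filter, filter_filter, add_comm]
    congr 1
    · rw [show {j ∈ s | ¬j < i ∧ ¬i < j} = {i} by
        ext j; simp only [mem_filter, mem_singleton, not_lt, le_antisymm_iff]; grind]
      exact sum_singleton _ _
    · exact sum_congr (filter_congr fun j _ ↦ ⟨And.right, fun h ↦ ⟨h.not_gt, h⟩⟩) fun _ _ ↦ rfl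
  have hlower : ∑ i ∈ s, ∑ j ∈ s with j < i, r i j = ∑ i ∈ s, ∑ j ∈ s with i < j, r i j := by
    rw [sum_comm' (t' := s) (s' := fun j ↦ {i ∈ s | j < i})
      fun i j ↦ by simp only [mem_filter]; tauto]
    exact sum_congr rfl fun j _ ↦ sum_congr rfl fun i _ ↦ hr i j
  rw [sum_congr rfl hsplit, sum_add_distrib, sum_add_distrib, hlower]
  ring

theorem sq_sum_mul_le_sum_sq_div_mul_sum_mul_sq {ι : Type*} (s : Finset ι) (a w x : ι → ℝ)
    (c : ℝ) (ha : ∑ i ∈ s, a i = 0) (hw : ∀ i ∈ s, 0 ≤ w i) (haw : ∀ i ∈ s, w i = 0 → a i = 0) :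
    (∑ i ∈ s, a i * x i) ^ 2 ≤ (∑ i ∈ s, a i ^ 2 / w i) * ∑ i ∈ s, w i * (x i - c) ^ 2 := by
  have hcentre : ∑ i ∈ s, a i * x i = ∑ i ∈ s, a i * (x i - c) := by
    simp only [mul_sub, sum_sub_distrib, ← sum_mul, ha, zero_mul, sub_zero]
  rw [hcentre]
  refine sum_sq_le_sum_mul_sum_of_sq_le_mul s (fun i hi ↦ div_nonneg (sq_nonneg _) (hw i hi))
    (fun i hi ↦ mul_nonneg (hw i hi) (sq_nonneg _)) fun i hi ↦ ?_
  rcases eq_or_ne (w i) 0 with h | h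
  · simp [haw i hi h]
  · exact le_of_eq (by field_simp)

theorem sum_mul_sq_sub_sum_mul {ι : Type*} (s : Finset ι) (w x : ι → ℝ)
    (hw : ∑ i ∈ s, w i = 1) :
    ∑ i ∈ s, w i * (x i - ∑ j ∈ s, w j * x j) ^ 2
      = ∑ i ∈ s, w i * x i ^ 2 - (∑ i ∈ s, w i * x i) ^ 2 := by
  set m := ∑ j ∈ s, w j * x j
  have hexpand : ∀ i ∈ s, w i * (x i - m) ^ 2 = w i * x i ^ 2 - 2 * m * (w i * x i) + m ^ 2 * w i :=
    fun i _ ↦ by ring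
  rw [sum_congr rfl hexpand, sum_add_distrib, sum_sub_distrib, ← mul_sum, ← mul_sum, hw]
  ring

theorem sum_range_sum_Ioc_comm {M : Type*} [AddCommMonoid M] (F : ℕ → ℕ → M) (n N : ℕ) :
    ∑ k ∈ range N, ∑ i ∈ Ioc k n, F k i = ∑ i ∈ Icc 1 n, ∑ k ∈ range (min i N), F k i :=
  sum_comm' fun k i ↦ by simp only [mem_range, mem_Ioc, mem_Icc, lt_min_iff]; omega

theorem sum_range_sub_mul_sum_Ioc {R : Type*} [CommRing R] (c g : ℕ → R) (n N : ℕ) :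
    ∑ k ∈ range N, (c (k + 1) - c k) * ∑ i ∈ Ioc k n, g i
      = ∑ i ∈ Icc 1 n, (c (min i N) - c 0) * g i := by
  simp_rw [mul_sum, sum_range_sum_Ioc_comm, ← sum_mul, sum_range_sub]

noncomputable def bernoulliStd (t : ℝ) : ℝ := √(t * (1 - t))

@[simp]
theorem bernoulliStd_zero : bernoulliStd 0 = 0 := by simp [bernoulliStd]

@[simp]
theorem bernoulliStd_one : bernoulliStd 1 = 0 := by simp [bernoulliStd]

theorem sq_bernoulliStd {t : ℝ} (h0 : 0 ≤ t) (h1 : t ≤ 1) : bernoulliStd t ^ 2 = t * (1 - t) :=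
  Real.sq_sqrt (mul_nonneg h0 (by linarith))

theorem sq_bernoulliStd_sub_div_le {a b : ℝ} (ha : 0 < a) (hab : a ≤ b) (hb : b < 1) :
    (bernoulliStd b - bernoulliStd a) ^ 2 / (b - a)
      ≤ (Real.log b - Real.log (1 - b) - (Real.log a - Real.log (1 - a))) / 4 := by
  rcases hab.eq_or_lt with rfl | hab
  · simp
  have hb0 : 0 < b := ha.trans hab
  have ha' : 0 < 1 - a := by linarith
  have hb' : 0 < 1 - b := by linarith
  -- `(σ b - σ a)² ≤ (y - x)² = (b - a) (y - x) / (y + x)`, and the logarithmic mean of `x` and `y`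
  -- is at most their arithmetic mean.
  set x := √(a * (1 - b))
  set y := √(b * (1 - a))
  have hx : 0 < x := Real.sqrt_pos.2 (mul_pos ha hb')
  have hxy : x ≤ y := Real.sqrt_le_sqrt (by nlinarith)
  have hx2 : x ^ 2 = a * (1 - b) := Real.sq_sqrt (mul_pos ha hb').le
  have hy2 : y ^ 2 = b * (1 - a) := Real.sq_sqrt (mul_pos hb0 ha').le
  have hσa := sq_bernoulliStd ha.le (by linarith)
  have hσb := sq_bernoulliStd hb0.le hb.le
  have hcross : bernoulliStd a * bernoulliStd b = x * y := by
    rw [bernoulliStd, bernoulliStd, ← Real.sqrt_mul (mul_pos ha ha').le,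
      ← Real.sqrt_mul (mul_pos ha hb').le]
    ring_nf
  have hprod : (y - x) * (y + x) = b - a := by linear_combination hy2 - hx2
  have hsq : (y - x) ^ 2 = (bernoulliStd b - bernoulliStd a) ^ 2 + (b - a) ^ 2 := by
    linear_combination hy2 + hx2 - hσb - hσa + 2 * hcross
  have hlog : Real.log y - Real.log x
      = (Real.log b + Real.log (1 - a) - (Real.log a + Real.log (1 - b))) / 2 := by
    rw [Real.log_sqrt (mul_pos hb0 ha').le, Real.log_sqrt (mul_pos ha hb').le,
      Real.log_mul hb0.ne' ha'.ne', Real.log_mul ha.ne' hb'.ne']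
    ring
  have hmean := two_mul_sub_div_add_le_log_sub_log hx hxy
  rw [hlog, mul_div_assoc] at hmean
  have hsum : 0 < y + x := by linarith
  rw [div_le_iff₀ (by linarith)]
  calc (bernoulliStd b - bernoulliStd a) ^ 2
      ≤ (y - x) ^ 2 := by rw [hsq]; exact le_add_of_nonneg_right (sq_nonneg _)
    _ = (y - x) / (y + x) * (b - a) := by rw [← hprod]; field_simp
    _ ≤ _ := mul_le_mul_of_nonneg_right (by linarith) (by linarith)

theorem sum_Ico_sq_bernoulliStd_sub_div_le {p : ℕ → ℝ} {n : ℕ} (hn : 1 ≤ n) (hp1 : 0 < p 1)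
    (hp : MonotoneOn p (Set.Icc 1 n)) (hpn : p n < 1) :
    ∑ k ∈ Ico 1 n, (bernoulliStd (p (k + 1)) - bernoulliStd (p k)) ^ 2 / (p (k + 1) - p k)
      ≤ (Real.log (p n) - Real.log (1 - p n) - (Real.log (p 1) - Real.log (1 - p 1))) / 4 := by
  rw [sub_div, ← sum_Ico_sub (fun k ↦ (Real.log (p k) - Real.log (1 - p k)) / 4) hn]
  refine sum_le_sum fun k hk ↦ ?_
  rw [mem_Ico] at hk
  have hk1 : p k ≤ p (k + 1) := hp ⟨hk.1, by omega⟩ ⟨by omega, hk.2⟩ k.le_succ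
  rw [← sub_div]
  exact sq_bernoulliStd_sub_div_le (hp1.trans_le (hp ⟨le_rfl, hn⟩ ⟨hk.1, by omega⟩ hk.1)) hk1
    ((hp ⟨by omega, hk.2⟩ ⟨hn, le_rfl⟩ hk.2).trans_lt hpn)

section Extension

variable {n : ℕ} {p q : ℕ → ℝ}

theorem sum_bernoulliStd_mul_eq_sum_range (hq0 : q 0 = 0) (hq : ∀ i ∈ Icc 1 n, q i = p i)
    (g : ℕ → ℝ) :
    ∑ i ∈ Icc 1 n, bernoulliStd (p i) * g i
      = ∑ k ∈ range (n + 1), (bernoulliStd (q (k + 1)) - bernoulliStd (q k))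
          * ∑ i ∈ Ioc k n, g i := by
  rw [sum_range_sub_mul_sum_Ioc (fun k ↦ bernoulliStd (q k))]
  refine sum_congr rfl fun i hi ↦ ?_
  rw [min_eq_left ((mem_Icc.1 hi).2.trans n.le_succ), hq i hi, hq0, bernoulliStd_zero, sub_zero]

theorem sum_range_mul_sq_sum_Ioc (hq0 : q 0 = 0) (hq : ∀ i ∈ Icc 1 n, q i = p i)
    (g : ℕ → ℝ) :
    ∑ k ∈ range (n + 1), (q (k + 1) - q k) * (∑ i ∈ Ioc k n, g i) ^ 2
      = ∑ i ∈ Icc 1 n, ∑ j ∈ Icc 1 n, p (min i j) * (g i * g j) := by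
  have hswap : ∑ k ∈ range (n + 1), (q (k + 1) - q k) * (∑ i ∈ Ioc k n, g i) ^ 2
      = ∑ i ∈ Icc 1 n, (∑ k ∈ range i, (q (k + 1) - q k) * ∑ j ∈ Ioc k n, g j) * g i := by
    have hexpand : ∀ k ∈ range (n + 1), (q (k + 1) - q k) * (∑ i ∈ Ioc k n, g i) ^ 2
        = ∑ i ∈ Ioc k n, (q (k + 1) - q k) * (∑ j ∈ Ioc k n, g j) * g i := fun k _ ↦ by
      rw [sq, ← mul_assoc]; exact mul_sum _ _ _
    rw [sum_congr rfl hexpand, sum_range_sum_Ioc_comm]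
    refine sum_congr rfl fun i hi ↦ ?_
    rw [min_eq_left ((mem_Icc.1 hi).2.trans n.le_succ), sum_mul]
  rw [hswap]
  refine sum_congr rfl fun i hi ↦ ?_
  rw [sum_range_sub_mul_sum_Ioc, sum_mul]
  refine sum_congr rfl fun j hj ↦ ?_
  rw [min_comm, hq0, sub_zero, hq _ (by rw [mem_Icc] at hi hj ⊢; omega)]
  ring

theorem modifiedGini_eq_sum_range (hq0 : q 0 = 0) (hq : ∀ i ∈ Icc 1 n, q i = p i)
    (hqn : q (n + 1) = 1) (g : ℕ → ℝ) :
    (∑ i ∈ Icc 1 n, p i * (1 - p i) * (g i) ^ 2)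
      + 2 * ∑ i ∈ Icc 1 n, ∑ j ∈ Icc (i + 1) n, p i * (1 - p j) * (g i * g j)
      = ∑ k ∈ range (n + 1), (q (k + 1) - q k)
          * (∑ i ∈ Ioc k n, g i - ∑ i ∈ Icc 1 n, p i * g i) ^ 2 := by
  have htotal : ∑ k ∈ range (n + 1), (q (k + 1) - q k) = 1 := by
    rw [sum_range_sub, hqn, hq0, sub_zero]
  have hmean : ∑ k ∈ range (n + 1), (q (k + 1) - q k) * ∑ i ∈ Ioc k n, g i
      = ∑ i ∈ Icc 1 n, p i * g i := by
    rw [sum_range_sub_mul_sum_Ioc]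
    refine sum_congr rfl fun i hi ↦ ?_
    rw [min_eq_left ((mem_Icc.1 hi).2.trans n.le_succ), hq i hi, hq0, sub_zero]
  rw [← hmean, sum_mul_sq_sub_sum_mul _ _ _ htotal, sum_range_mul_sq_sum_Ioc hq0 hq, hmean, sq,
    sum_mul_sum, ← sum_sub_distrib]
  simp_rw [← sum_sub_distrib]
  rw [sum_sum_eq_sum_add_two_mul_sum_lt _ _ fun i j ↦ by rw [min_comm]; ring]
  congr 1
  · exact sum_congr rfl fun i _ ↦ by rw [min_self]; ring
  · refine congrArg (2 * ·) (sum_congr rfl fun i _ ↦ ?_)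
    rw [show {j ∈ Icc 1 n | i < j} = Icc (i + 1) n by ext j; simp only [mem_filter, mem_Icc]; omega]
    exact sum_congr rfl fun j hj ↦ by rw [min_eq_left (by rw [mem_Icc] at hj; omega)]; ring

theorem sq_sum_bernoulliStd_mul_le (hq0 : q 0 = 0) (hq : ∀ i ∈ Icc 1 n, q i = p i)
    (hqn : q (n + 1) = 1) (hqmono : Monotone q) (g : ℕ → ℝ) :
    (∑ i ∈ Icc 1 n, bernoulliStd (p i) * g i) ^ 2
      ≤ (∑ k ∈ range (n + 1),
          (bernoulliStd (q (k + 1)) - bernoulliStd (q k)) ^ 2 / (q (k + 1) - q k))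
        * ∑ k ∈ range (n + 1), (q (k + 1) - q k)
          * (∑ i ∈ Ioc k n, g i - ∑ i ∈ Icc 1 n, p i * g i) ^ 2 := by
  rw [sum_bernoulliStd_mul_eq_sum_range hq0 hq]
  refine sq_sum_mul_le_sum_sq_div_mul_sum_mul_sq _ _ _ _ _ ?_
    (fun k _ ↦ sub_nonneg.2 (hqmono k.le_succ)) fun k _ h ↦ by rw [sub_eq_zero.1 h, sub_self]
  rw [sum_range_sub (fun k ↦ bernoulliStd (q k)), hqn, hq0, bernoulliStd_one, bernoulliStd_zero,
    sub_zero]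

theorem sum_range_sq_bernoulliStd_sub_div_le (hq0 : q 0 = 0) (hq : ∀ i ∈ Icc 1 n, q i = p i)
    (hqn : q (n + 1) = 1) (hn : 1 ≤ n) (hp1 : 0 < p 1) (hp : MonotoneOn p (Set.Icc 1 n))
    (hpn : p n < 1) :
    ∑ k ∈ range (n + 1), (bernoulliStd (q (k + 1)) - bernoulliStd (q k)) ^ 2 / (q (k + 1) - q k)
      ≤ 3 + Real.log (1 / p 1) + Real.log (1 / (1 - p n)) := by
  have hp1n : p 1 ≤ p n := hp ⟨le_rfl, hn⟩ ⟨hn, le_rfl⟩ hn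
  have hfirst : (bernoulliStd (p 1) - bernoulliStd 0) ^ 2 / (p 1 - 0) = 1 - p 1 := by
    rw [bernoulliStd_zero, sub_zero, sub_zero, sq_bernoulliStd hp1.le (by linarith)]
    field_simp
  have hlast : (bernoulliStd 1 - bernoulliStd (p n)) ^ 2 / (1 - p n) = p n := by
    rw [bernoulliStd_one, zero_sub, neg_sq, sq_bernoulliStd (by linarith) (by linarith)]
    field_simp [(by linarith : 1 - p n ≠ 0)]
  have hinterior : ∑ k ∈ Ico 1 n,
        (bernoulliStd (q (k + 1)) - bernoulliStd (q k)) ^ 2 / (q (k + 1) - q k)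
      = ∑ k ∈ Ico 1 n, (bernoulliStd (p (k + 1)) - bernoulliStd (p k)) ^ 2 / (p (k + 1) - p k) :=
    sum_congr rfl fun k hk ↦ by
      rw [mem_Ico] at hk
      rw [hq k (mem_Icc.2 ⟨hk.1, hk.2.le⟩), hq (k + 1) (mem_Icc.2 ⟨by omega, hk.2⟩)]
  rw [sum_range_succ, range_eq_Ico, sum_eq_sum_Ico_succ_bot (by omega), zero_add, hinterior,
    hq0, hq 1 (mem_Icc.2 ⟨le_rfl, hn⟩), hq n (mem_Icc.2 ⟨hn, le_rfl⟩), hqn, hfirst, hlast,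
    one_div, one_div, Real.log_inv, Real.log_inv]
  have hmiddle := sum_Ico_sq_bernoulliStd_sub_div_le hn hp1 hp hpn
  have hlogpn := Real.log_nonpos (hp1.le.trans hp1n) hpn.le
  have hlogp1 := Real.log_nonpos (by linarith : 0 ≤ 1 - p 1) (by linarith)
  have hlog1 := Real.log_nonpos hp1.le (by linarith)
  have hlogn := Real.log_nonpos (by linarith : 0 ≤ 1 - p n) (by linarith)
  linarith

end Extension

def extendByZeroOne (p : ℕ → ℝ) (n k : ℕ) : ℝ :=
  if k = 0 then 0 else if k ≤ n then p k else 1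

section extendByZeroOne

variable {p : ℕ → ℝ} {n k : ℕ}

@[simp]
theorem extendByZeroOne_zero : extendByZeroOne p n 0 = 0 := rfl

theorem extendByZeroOne_of_mem (hk : k ∈ Icc 1 n) : extendByZeroOne p n k = p k := by
  rw [mem_Icc] at hk
  simp [extendByZeroOne, hk.2, Nat.one_le_iff_ne_zero.1 hk.1]

theorem extendByZeroOne_of_lt (hk : n < k) : extendByZeroOne p n k = 1 := by
  simp [extendByZeroOne, hk.not_ge, (n.zero_le.trans_lt hk).ne']

theorem monotone_extendByZeroOne (hp1 : 0 ≤ p 1) (hp : MonotoneOn p (Set.Icc 1 n))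
    (hpn : p n ≤ 1) : Monotone (extendByZeroOne p n) := by
  refine monotone_nat_of_le_succ fun k ↦ ?_
  unfold extendByZeroOne
  split_ifs <;> first
    | omega
    | contradiction
    | exact le_rfl
    | exact zero_le_one
    | (subst_vars; exact hp1)
    | exact hp ⟨by omega, by omega⟩ ⟨by omega, by omega⟩ k.le_succ
    | (obtain rfl : k = n := (by omega); exact hpn)

end extendByZeroOne

/-- For `p ∈ ℝⁿ` with `0 < p₁ ≤ ⋯ ≤ pₙ < 1` and any `g ∈ ℝⁿ`, the modified Gini-weighted
smoothness dominates the L1 Gini-weighted smoothness up to a logarithmic factor: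
`γ̃²(p,g) ≥ γ₁²(p,g) / (3 + ln(1/p₁) + ln(1/(1−pₙ)))`. -/
theorem modified_gini_ge_l1_gini_div_log (n : ℕ) (hn : 1 ≤ n) (p g : ℕ → ℝ)
    (hp1 : 0 < p 1)
    (hmono : ∀ i, 1 ≤ i → i < n → p i ≤ p (i + 1))
    (hpn : p n < 1) :
    (∑ i ∈ Finset.Icc 1 n, p i * (1 - p i) * (g i) ^ 2)
      + 2 * ∑ i ∈ Finset.Icc 1 n, ∑ j ∈ Finset.Icc (i + 1) n,
          p i * (1 - p j) * (g i * g j)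
    ≥ (∑ i ∈ Finset.Icc 1 n, Real.sqrt (p i * (1 - p i)) * g i) ^ 2
        / (3 + Real.log (1 / p 1) + Real.log (1 / (1 - p n))) := by
  have hp : MonotoneOn p (Set.Icc 1 n) :=
    monotoneOn_of_le_succ Set.ordConnected_Icc fun k _ hk hk1 ↦ hmono k hk.1 hk1.2
  have hp1n : p 1 ≤ p n := hp ⟨le_rfl, hn⟩ ⟨hn, le_rfl⟩ hn
  have hD : 0 < 3 + Real.log (1 / p 1) + Real.log (1 / (1 - p n)) := by
    have h1 := Real.log_nonneg (one_le_one_div hp1 (by linarith))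
    have h2 := Real.log_nonneg (one_le_one_div (sub_pos.2 hpn) (by linarith))
    linarith
  set q := extendByZeroOne p n
  have hq0 : q 0 = 0 := extendByZeroOne_zero
  have hq : ∀ i ∈ Icc 1 n, q i = p i := fun i hi ↦ extendByZeroOne_of_mem hi
  have hqn : q (n + 1) = 1 := extendByZeroOne_of_lt n.lt_succ_self
  have hqmono : Monotone q := monotone_extendByZeroOne hp1.le hp hpn.le
  rw [ge_iff_le, div_le_iff₀ hD, modifiedGini_eq_sum_range hq0 hq hqn, mul_comm]
  exact (sq_sum_bernoulliStd_mul_le hq0 hq hqn hqmono g).trans <|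
    mul_le_mul_of_nonneg_right (sum_range_sq_bernoulliStd_sub_div_le hq0 hq hqn hn hp1 hp hpn)
      (sum_nonneg fun k _ ↦ mul_nonneg (sub_nonneg.2 (hqmono k.le_succ)) (sq_nonneg _))
end

section
/- Let K ≥ 1, let μ ∈ [0,1]^K and let g ∈ ℝ^K with g_i ≥ 0 for all i. Then max over all nonempty subsets A ⊆ {1,…,K} of (1/|A|)·(∑_{i∈A} √(μ_i(1−μ_i)) g_i)² is at least (1/(1+ln K))·∑_{i=1}^K μ_i(1−μ_i) g_i². -/
/-!
Put `aᵢ = √(μᵢ(1−μᵢ)) gᵢ ≥ 0` and list the `aᵢ` in decreasing order `b₀ ≥ b₁ ≥ ⋯`.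
Choose `k` maximising `(k+1) b_k²`, and let `A` be the indices of the `k+1` largest entries.
Then `(∑_A a)² ≥ ((k+1) b_k)² = (k+1) · (k+1) b_k²`, while `b_j² ≤ (k+1) b_k² / (j+1)` for
every `j`, so `∑ a² ≤ H_K (k+1) b_k² ≤ (1 + log K) (k+1) b_k²`.
-/

open Finset

theorem sum_le_harmonic_mul_of_succ_mul_le {K : ℕ} {c : Fin K → ℝ} {M : ℝ}
    (hc : ∀ j : Fin K, ((j : ℝ) + 1) * c j ≤ M) : ∑ j, c j ≤ harmonic K * M := by
  have h : ∀ j : Fin K, c j ≤ ((j : ℝ) + 1)⁻¹ * M := fun j => by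
    rw [inv_mul_eq_div, le_div_iff₀ (by positivity), mul_comm]; exact hc j
  calc ∑ j, c j ≤ ∑ j : Fin K, ((j : ℝ) + 1)⁻¹ * M := sum_le_sum fun j _ => h j
    _ = harmonic K * M := by
      rw [← sum_mul, Fin.sum_univ_eq_sum_range (fun j => ((j : ℝ) + 1)⁻¹), harmonic]
      push_cast; rfl

theorem succ_mul_le_sum_Iic_of_antitone {K : ℕ} {b : Fin K → ℝ} (hb : Antitone b)
    (k : Fin K) : ((k : ℝ) + 1) * b k ≤ ∑ j ∈ Iic k, b j := by
  have := card_nsmul_le_sum (Iic k) b (b k) fun j hj => hb (mem_Iic.mp hj)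
  rw [Fin.card_Iic, nsmul_eq_mul] at this
  exact_mod_cast this

theorem exists_Iic_sq_sum_ge_of_antitone {K : ℕ} (hK : 1 ≤ K) {b : Fin K → ℝ}
    (hb : Antitone b) (hb0 : ∀ j, 0 ≤ b j) :
    ∃ k : Fin K,
      ((k : ℝ) + 1) / (1 + Real.log K) * ∑ j, b j ^ 2 ≤ (∑ j ∈ Iic k, b j) ^ 2 := by
  have : Nonempty (Fin K) := ⟨⟨0, hK⟩⟩
  obtain ⟨k, -, hk⟩ :=
    exists_max_image univ (fun j : Fin K => ((j : ℝ) + 1) * b j ^ 2) univ_nonempty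
  refine ⟨k, ?_⟩
  have hlog : 0 < 1 + Real.log K := by
    have := Real.log_nonneg (by exact_mod_cast hK : (1 : ℝ) ≤ K); linarith
  have hsum : ∑ j, b j ^ 2 ≤ (1 + Real.log K) * (((k : ℝ) + 1) * b k ^ 2) :=
    (sum_le_harmonic_mul_of_succ_mul_le fun j => hk j (mem_univ j)).trans
      (mul_le_mul_of_nonneg_right (harmonic_le_one_add_log K) (by positivity))
  calc ((k : ℝ) + 1) / (1 + Real.log K) * ∑ j, b j ^ 2
      ≤ ((k : ℝ) + 1) / (1 + Real.log K) *
          ((1 + Real.log K) * (((k : ℝ) + 1) * b k ^ 2)) := by gcongr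
    _ = (((k : ℝ) + 1) * b k) ^ 2 := by field_simp
    _ ≤ (∑ j ∈ Iic k, b j) ^ 2 := by
        gcongr
        · exact mul_nonneg (by positivity) (hb0 k)
        · exact succ_mul_le_sum_Iic_of_antitone hb k

theorem exists_sq_sum_ge_card_div_log_mul_sum_sq {K : ℕ} (hK : 1 ≤ K) {a : Fin K → ℝ}
    (ha : ∀ i, 0 ≤ a i) :
    ∃ A : Finset (Fin K), A.Nonempty ∧
      (A.card : ℝ) / (1 + Real.log K) * ∑ i, a i ^ 2 ≤ (∑ i ∈ A, a i) ^ 2 := by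
  set σ := Tuple.sort (OrderDual.toDual ∘ a)
  have hanti : Antitone (a ∘ σ) := (Tuple.monotone_sort (OrderDual.toDual ∘ a)).dual_right
  obtain ⟨k, hk⟩ := exists_Iic_sq_sum_ge_of_antitone hK hanti fun j => ha (σ j)
  refine ⟨(Iic k).map σ.toEmbedding, ⟨σ k, mem_map_of_mem _ (mem_Iic.mpr le_rfl)⟩, ?_⟩
  rw [card_map, Fin.card_Iic, sum_map, ← Equiv.sum_comp σ (fun i => a i ^ 2)]
  push_cast
  exact hk

/-- For `μ ∈ [0,1]^K`, `g ≥ 0`, there is a nonempty subset `A ⊆ {1,…,K}` with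
`(∑_{i∈A} √(μᵢ(1−μᵢ)) gᵢ)² ≥ (|A|/(1+ln K)) · ∑_i μᵢ(1−μᵢ)gᵢ²`. -/
theorem l1_gini_subset_ge_log_l2_gini (K : ℕ) (hK : 1 ≤ K) (μ g : Fin K → ℝ)
    (hμ0 : ∀ i, 0 ≤ μ i) (hμ1 : ∀ i, μ i ≤ 1) (hg : ∀ i, 0 ≤ g i) :
    ∃ A : Finset (Fin K), A.Nonempty ∧
      (∑ i ∈ A, Real.sqrt (μ i * (1 - μ i)) * g i) ^ 2
        ≥ (A.card : ℝ) / (1 + Real.log K) * ∑ i, μ i * (1 - μ i) * (g i) ^ 2 := by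
  have hsq (i : Fin K) :
      (Real.sqrt (μ i * (1 - μ i)) * g i) ^ 2 = μ i * (1 - μ i) * g i ^ 2 := by
    rw [mul_pow, Real.sq_sqrt (mul_nonneg (hμ0 i) (sub_nonneg.mpr (hμ1 i)))]
  obtain ⟨A, hA, hineq⟩ := exists_sq_sum_ge_card_div_log_mul_sum_sq hK
    (a := fun i => Real.sqrt (μ i * (1 - μ i)) * g i)
    fun i => mul_nonneg (Real.sqrt_nonneg _) (hg i)
  simp only [hsq] at hineq
  exact ⟨A, hA, hineq⟩
end

section
/- Let K ≥ 1, let μ ∈ ℝ^K satisfy 0 < μ_1 ≤ μ_2 ≤ ⋯ ≤ μ_K < 1, and let g ∈ ℝ^K with g_i ≥ 0 for all i. Then max over all nonempty subsets A ⊆ {1,…,K} of γ̃²(A)/|A| is at least (∑_{i=1}^K μ_i(1−μ_i) g_i²) / ((1+ln K)·(3 + ln(1/μ_1) + ln(1/(1−μ_K)))), where γ̃²(A) = ∑_{i∈A} μ_i(1−μ_i)g_i² + 2∑_{i<j, i,j∈A} μ_i(1−μ_j)g_i g_j. -/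
/-!
Put `xᵢ = logit μᵢ` and, for a centre `c`, `wᵢ = gᵢ · min (μᵢ e^{-c/2}) ((1 - μᵢ) e^{c/2})`.
Then `wᵢ wⱼ ≤ μᵢ (1 - μⱼ) gᵢ gⱼ`, so `(∑_{i ∈ A} wᵢ)² ≤ γ̃²(A)` for every `A`, while
`wᵢ² = μᵢ (1 - μᵢ) gᵢ² e^{-|xᵢ - c|}`. If `A` runs over the sets of the `r` largest weights, the
bound `∑ 1/r ≤ 1 + ln K` gives one with `|A| ∑ wᵢ² ≤ (1 + ln K) (∑_{i ∈ A} wᵢ)²`. Finally every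
`xᵢ` lies in `[-ln (1/μ₁), ln (1/(1 - μ_K))]`, where the kernels `e^{-|x - c|}` centred at the
at most `3 + ln (1/μ₁) + ln (1/(1 - μ_K))` integers `c` around this interval sum to at least `1`,
so some integer centre keeps that fraction of `γ₂²`.
-/

open Finset Real

variable {ι : Type*}

lemma sq_sum_eq_sum_sq_add_two_mul_sum_lt {R : Type*} [LinearOrder ι] [CommSemiring R]
    (s : Finset ι) (f : ι → R) :
    (∑ i ∈ s, f i) ^ 2 = ∑ i ∈ s, f i ^ 2 + 2 * ∑ i ∈ s, ∑ j ∈ s with i < j, f i * f j := by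
  induction s using Finset.induction_on_max with
  | empty => simp
  | insert a s ha ih =>
    have ha' : a ∉ s := fun h => lt_irrefl a (ha a h)
    have hlt : ∀ i ∈ s, ∑ j ∈ insert a s with i < j, f i * f j
        = f i * f a + ∑ j ∈ s with i < j, f i * f j := fun i hi => by
      rw [filter_insert, if_pos (ha i hi), sum_insert (by simp [ha'])]
    have hgt : {j ∈ insert a s | a < j} = ∅ :=
      filter_eq_empty_iff.2 fun j hj => by
        rcases mem_insert.1 hj with rfl | hj
        exacts [lt_irrefl j, (ha j hj).not_gt]
    rw [sum_insert ha', sum_insert ha', sum_insert ha', hgt, sum_empty, sum_congr rfl hlt,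
      sum_add_distrib, ← sum_mul, add_sq, ih]
    ring

lemma sq_sum_le_of_mul_le [LinearOrder ι] (s : Finset ι) (f : ι → ℝ)
    (M : ι → ι → ℝ) (h : ∀ i ∈ s, ∀ j ∈ s, f i * f j ≤ M i j) :
    (∑ i ∈ s, f i) ^ 2 ≤ ∑ i ∈ s, M i i + 2 * ∑ i ∈ s, ∑ j ∈ s with i < j, M i j := by
  rw [sq_sum_eq_sum_sq_add_two_mul_sum_lt]
  refine add_le_add (sum_le_sum fun i hi => ?_) ?_
  · rw [sq]; exact h i hi i hi
  · gcongr with i hi j hj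
    exact h i hi j (mem_filter.1 hj).1

lemma sum_inv_card_filter_le_le_harmonic {α : Type*} [DecidableEq ι] [LinearOrder α]
    (s : Finset ι) (f : ι → α) :
    ∑ i ∈ s, ((#{j ∈ s | f i ≤ f j} : ℕ) : ℝ)⁻¹ ≤ harmonic #s := by
  induction s using Finset.induction_on_min_value f with
  | empty => simp
  | insert a s ha hmin ih =>
    have hall : {j ∈ insert a s | f a ≤ f j} = insert a s :=
      filter_true_of_mem fun j hj => by
        rcases mem_insert.1 hj with rfl | hj
        exacts [le_rfl, hmin j hj]
    have hmono : ∀ i ∈ s, ((#{j ∈ insert a s | f i ≤ f j} : ℕ) : ℝ)⁻¹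
        ≤ ((#{j ∈ s | f i ≤ f j} : ℕ) : ℝ)⁻¹ := fun i hi => by
      have hpos : 0 < #(s.filter fun j => f i ≤ f j) :=
        card_pos.2 ⟨i, mem_filter.2 ⟨hi, le_rfl⟩⟩
      gcongr
      exact subset_insert a s
    rw [sum_insert ha, hall, card_insert_of_notMem ha, harmonic_succ]
    push_cast
    linarith [sum_le_sum hmono]

lemma exists_subset_card_mul_sum_sq_le [DecidableEq ι] (s : Finset ι)
    (hs : s.Nonempty) (w : ι → ℝ) (hw : ∀ i ∈ s, 0 ≤ w i) :
    ∃ A ⊆ s, A.Nonempty ∧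
      #A * ∑ i ∈ s, w i ^ 2 ≤ (∑ i ∈ A, w i) ^ 2 * (1 + log #s) := by
  set W := ∑ i ∈ s, w i ^ 2
  set H := 1 + log #s
  have hH : 0 ≤ H := by have := log_natCast_nonneg #s; positivity
  set r : ι → ℕ := fun i => #{j ∈ s | w i ≤ w j}
  have hsum : ∑ i ∈ s, W / r i ≤ ∑ i ∈ s, w i ^ 2 * H := by
    calc ∑ i ∈ s, W / r i = W * ∑ i ∈ s, ((r i : ℕ) : ℝ)⁻¹ := by
          simp only [div_eq_mul_inv, mul_sum]
      _ ≤ W * H :=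
          mul_le_mul_of_nonneg_left ((sum_inv_card_filter_le_le_harmonic s w).trans
            (harmonic_le_one_add_log #s)) (sum_nonneg fun i _ => sq_nonneg _)
      _ = ∑ i ∈ s, w i ^ 2 * H := sum_mul ..
  obtain ⟨i, hi, hle⟩ := exists_le_of_sum_le hs hsum
  have hiA : i ∈ s.filter fun j => w i ≤ w j := mem_filter.2 ⟨hi, le_rfl⟩
  have hri : (0 : ℝ) < r i := Nat.cast_pos.2 (card_pos.2 ⟨i, hiA⟩)
  have hmass : r i * w i ≤ ∑ j ∈ s with w i ≤ w j, w j := by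
    simpa using card_nsmul_le_sum {j ∈ s | w i ≤ w j} w (w i) fun j hj => (mem_filter.1 hj).2
  refine ⟨{j ∈ s | w i ≤ w j}, filter_subset _ _, ⟨i, hiA⟩, ?_⟩
  rw [div_le_iff₀ hri] at hle
  calc (r i : ℝ) * W ≤ r i * (w i ^ 2 * H * r i) := by gcongr
    _ = (r i * w i) ^ 2 * H := by ring
    _ ≤ (∑ j ∈ s with w i ≤ w j, w j) ^ 2 * H := by
        gcongr
        exact mul_nonneg hri.le (hw i hi)

lemma one_le_sum_exp_neg_abs_sub_intCast (x : ℝ) {a b : ℤ} (ha : a ≤ ⌊x⌋) (hb : ⌊x⌋ + 1 ≤ b) :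
    1 ≤ ∑ t ∈ Icc a b, exp (-|x - t|) := by
  have hfloor := Int.floor_le x
  have hlt_floor := Int.lt_floor_add_one x
  calc (1 : ℝ) ≤ exp (-|x - ⌊x⌋|) + exp (-|x - (⌊x⌋ + 1 : ℤ)|) := by
        push_cast
        rw [abs_of_nonneg (by linarith), abs_of_neg (by linarith), neg_sub, neg_neg]
        linarith [add_one_le_exp (⌊x⌋ - x), add_one_le_exp (x - (⌊x⌋ + 1))]
    _ = ∑ t ∈ {⌊x⌋, ⌊x⌋ + 1}, exp (-|x - t|) := by rw [sum_pair (lt_add_one _).ne]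
    _ ≤ ∑ t ∈ Icc a b, exp (-|x - t|) :=
        sum_le_sum_of_subset_of_nonneg (fun t ht => by
          rw [mem_insert, mem_singleton] at ht
          rw [mem_Icc]
          rcases ht with rfl | rfl <;> constructor <;> linarith) fun _ _ _ => (exp_pos _).le

lemma exists_intCast_sum_le_mul_sum_mul_exp_neg_abs (s : Finset ι) (a x : ι → ℝ)
    (ha : ∀ i ∈ s, 0 ≤ a i) {L₁ L₂ : ℝ} (hL : -L₁ ≤ L₂) (hx : ∀ i ∈ s, x i ∈ Set.Icc (-L₁) L₂) :
    ∃ c : ℤ, ∑ i ∈ s, a i ≤ (3 + L₁ + L₂) * ∑ i ∈ s, a i * exp (-|x i - c|) := by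
  set G : Finset ℤ := Icc ⌊-L₁⌋ (⌊L₂⌋ + 1)
  have hle : ⌊-L₁⌋ ≤ ⌊L₂⌋ + 1 := by linarith [Int.floor_le_floor hL]
  have hG : (#G : ℝ) ≤ 3 + L₁ + L₂ := by
    have hcard : (#G : ℤ) = ⌊L₂⌋ + 1 + 1 - ⌊-L₁⌋ := Int.card_Icc_of_le _ _ (by omega)
    have : (#G : ℝ) = (⌊L₂⌋ + 1 + 1 - ⌊-L₁⌋ : ℤ) := by rw [← hcard]; norm_cast
    rw [this]
    push_cast
    linarith [Int.floor_le L₂, Int.lt_floor_add_one (-L₁)]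
  have hGne : G.Nonempty := nonempty_Icc.2 hle
  have hcover : ∀ i ∈ s, 1 ≤ ∑ t ∈ G, exp (-|x i - t|) := fun i hi =>
    one_le_sum_exp_neg_abs_sub_intCast _ (Int.floor_le_floor (hx i hi).1)
      (by linarith [Int.floor_le_floor (hx i hi).2])
  have hsum : ∑ t ∈ G, (∑ i ∈ s, a i) / #G ≤ ∑ t ∈ G, ∑ i ∈ s, a i * exp (-|x i - t|) := by
    rw [sum_const, nsmul_eq_mul, mul_div_cancel₀ _ (by positivity), sum_comm]
    refine sum_le_sum fun i hi => ?_
    rw [← mul_sum]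
    exact le_mul_of_one_le_right (ha i hi) (hcover i hi)
  obtain ⟨c, -, hc⟩ := exists_le_of_sum_le hGne hsum
  refine ⟨c, ?_⟩
  rw [div_le_iff₀' (by positivity)] at hc
  exact hc.trans (by gcongr; exact sum_nonneg fun i hi => mul_nonneg (ha i hi) (exp_pos _).le)

noncomputable def logit (p : ℝ) : ℝ := log (p / (1 - p))

lemma min_mul_exp_sq {a b : ℝ} (ha : 0 < a) (hb : 0 < b) (c : ℝ) :
    min (a * exp (-c / 2)) (b * exp (c / 2)) ^ 2 = a * b * exp (-|log (a / b) - c|) := by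
  obtain ⟨x, rfl⟩ : ∃ x, a = b * exp x :=
    ⟨log (a / b), by rw [exp_log (div_pos ha hb)]; field_simp⟩
  rw [mul_div_cancel_left₀ _ hb.ne', log_exp, mul_assoc, ← exp_add,
    show b * exp x * b * exp (-|x - c|) = b ^ 2 * exp (x + -|x - c|) by rw [exp_add]; ring]
  rcases le_total x c with h | h
  · rw [min_eq_left (by gcongr; linarith), abs_of_nonpos (by linarith), mul_pow, ← exp_nat_mul]
    ring_nf
  · rw [min_eq_right (by gcongr; linarith), abs_of_nonneg (by linarith), mul_pow, ← exp_nat_mul]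
    ring_nf

lemma neg_log_one_div_le_logit {a p : ℝ} (ha : 0 < a) (hap : a ≤ p) (hp : p < 1) :
    -log (1 / a) ≤ logit p := by
  rw [one_div, log_inv, neg_neg, logit]
  exact log_le_log ha (hap.trans (le_div_self (by linarith) (by linarith) (by linarith)))

lemma logit_le_log_one_div_one_sub {p b : ℝ} (hp : 0 < p) (hpb : p ≤ b) (hb : b < 1) :
    logit p ≤ log (1 / (1 - b)) := by
  refine log_le_log (div_pos hp (by linarith)) ?_
  calc p / (1 - p) ≤ 1 / (1 - p) := by gcongr <;> linarith
    _ ≤ 1 / (1 - b) := by gcongr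

noncomputable def giniWeight (μ g : ι → ℝ) (c : ℝ) (i : ι) : ℝ :=
  g i * min (μ i * exp (-c / 2)) ((1 - μ i) * exp (c / 2))

lemma giniWeight_mul_le {μ g : ι → ℝ} {i j : ι} (hμi : 0 ≤ μ i) (hμj₀ : 0 ≤ μ j)
    (hμj₁ : μ j ≤ 1) (hgi : 0 ≤ g i) (hgj : 0 ≤ g j) (c : ℝ) :
    giniWeight μ g c i * giniWeight μ g c j ≤ μ i * (1 - μ j) * (g i * g j) := by
  calc giniWeight μ g c i * giniWeight μ g c j
      ≤ g i * (μ i * exp (-c / 2)) * (g j * ((1 - μ j) * exp (c / 2))) := by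
        unfold giniWeight
        gcongr
        · exact min_le_left _ _
        · exact min_le_right _ _
    _ = μ i * (1 - μ j) * (g i * g j) := by
        rw [show -c / 2 = -(c / 2) by ring, exp_neg]
        field_simp

lemma giniWeight_sq {μ g : ι → ℝ} {i : ι} (h0 : 0 < μ i) (h1 : μ i < 1) (c : ℝ) :
    giniWeight μ g c i ^ 2 = μ i * (1 - μ i) * g i ^ 2 * exp (-|logit (μ i) - c|) := by
  rw [giniWeight, mul_pow, min_mul_exp_sq h0 (by linarith), logit]
  ring

variable [LinearOrder ι]

noncomputable def modifiedGini (μ g : ι → ℝ) (A : Finset ι) : ℝ :=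
  ∑ i ∈ A, μ i * (1 - μ i) * g i ^ 2 +
    2 * ∑ i ∈ A, ∑ j ∈ A with i < j, μ i * (1 - μ j) * (g i * g j)

lemma sq_sum_giniWeight_le_modifiedGini {μ g : ι → ℝ} {A : Finset ι}
    (hμ : ∀ i ∈ A, μ i ∈ Set.Icc 0 1) (hg : ∀ i ∈ A, 0 ≤ g i) (c : ℝ) :
    (∑ i ∈ A, giniWeight μ g c i) ^ 2 ≤ modifiedGini μ g A := by
  have := sq_sum_le_of_mul_le A (giniWeight μ g c) (fun i j => μ i * (1 - μ j) * (g i * g j))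
    fun i hi j hj => giniWeight_mul_le (hμ i hi).1 (hμ j hj).1 (hμ j hj).2 (hg i hi) (hg j hj) c
  simpa only [modifiedGini, sq] using this

lemma exists_subset_card_mul_le_modifiedGini (s : Finset ι) (hs : s.Nonempty) {μ g : ι → ℝ}
    (hμ : ∀ i ∈ s, μ i ∈ Set.Ioo 0 1) (hg : ∀ i ∈ s, 0 ≤ g i) (c : ℝ) :
    ∃ A ⊆ s, A.Nonempty ∧ #A * ∑ i ∈ s, μ i * (1 - μ i) * g i ^ 2 * exp (-|logit (μ i) - c|)
      ≤ modifiedGini μ g A * (1 + log #s) := by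
  have hw : ∀ i ∈ s, 0 ≤ giniWeight μ g c i := fun i hi =>
    have := (hμ i hi).2
    mul_nonneg (hg i hi) (le_min (mul_nonneg (hμ i hi).1.le (exp_pos _).le)
      (mul_nonneg (by linarith) (exp_pos _).le))
  obtain ⟨A, hAs, hA, hcard⟩ := exists_subset_card_mul_sum_sq_le s hs (giniWeight μ g c) hw
  refine ⟨A, hAs, hA, ?_⟩
  rw [← sum_congr rfl fun i hi => giniWeight_sq (g := g) (hμ i hi).1 (hμ i hi).2 c]
  refine hcard.trans (mul_le_mul_of_nonneg_right ?_ (by positivity))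
  exact sq_sum_giniWeight_le_modifiedGini (fun i hi => Set.Ioo_subset_Icc_self (hμ i (hAs hi)))
    (fun i hi => hg i (hAs hi)) c

/-- For `μ ∈ ℝ^K` with `0 < μ₁ ≤ ⋯ ≤ μ_K < 1` and `g ≥ 0`, there exists a nonempty subset
`A ⊆ {1,…,K}` such that `γ̃²(A)/|A| ≥ γ₂² / ((1+ln K)(3 + ln(1/μ₁) + ln(1/(1−μ_K))))`,
where `γ̃²(A) = ∑_{i∈A} μᵢ(1−μᵢ)gᵢ² + 2∑_{i<j ∈ A} μᵢ(1−μⱼ)gᵢgⱼ` and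
`γ₂² = ∑_{i=1}^K μᵢ(1−μᵢ)gᵢ²`. -/
theorem max_modified_gini_subset_ge_l2_gini (K : ℕ) (hK : 1 ≤ K) (μ g : ℕ → ℝ)
    (hμ1 : 0 < μ 1)
    (hmono : ∀ i, 1 ≤ i → i < K → μ i ≤ μ (i + 1))
    (hμK : μ K < 1)
    (hg : ∀ i, 0 ≤ g i) :
    ∃ A : Finset ℕ, A.Nonempty ∧ A ⊆ Finset.Icc 1 K ∧
      ((∑ i ∈ A, μ i * (1 - μ i) * (g i) ^ 2)
          + 2 * ∑ i ∈ A, ∑ j ∈ A.filter (fun j => i < j), μ i * (1 - μ j) * (g i * g j))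
        / (A.card : ℝ)
      ≥ (∑ i ∈ Finset.Icc 1 K, μ i * (1 - μ i) * (g i) ^ 2)
          / ((1 + Real.log K) * (3 + Real.log (1 / μ 1) + Real.log (1 / (1 - μ K)))) := by
  have hμmono : MonotoneOn μ (Set.Icc 1 K) :=
    monotoneOn_of_le_add_one Set.ordConnected_Icc fun i _ hi hi' => hmono i hi.1 hi'.2
  have hμ : ∀ i ∈ Icc 1 K, μ 1 ≤ μ i ∧ μ i ≤ μ K := fun i hi =>
    have hi : i ∈ Set.Icc 1 K := mem_Icc.1 hi
    ⟨hμmono ⟨le_rfl, hK⟩ hi hi.1, hμmono hi ⟨hK, le_rfl⟩ hi.2⟩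
  have hlogit : ∀ i ∈ Icc 1 K,
      logit (μ i) ∈ Set.Icc (-log (1 / μ 1)) (log (1 / (1 - μ K))) := fun i hi =>
    ⟨neg_log_one_div_le_logit hμ1 (hμ i hi).1 ((hμ i hi).2.trans_lt hμK),
      logit_le_log_one_div_one_sub (hμ1.trans_le (hμ i hi).1) (hμ i hi).2 hμK⟩
  have hμ01 : ∀ i ∈ Icc 1 K, μ i ∈ Set.Ioo 0 1 := fun i hi =>
    ⟨hμ1.trans_le (hμ i hi).1, (hμ i hi).2.trans_lt hμK⟩
  have h1 : 1 ∈ Icc 1 K := mem_Icc.2 ⟨le_rfl, hK⟩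
  have hL := (hlogit 1 h1).1.trans (hlogit 1 h1).2
  set W := ∑ i ∈ Icc 1 K, μ i * (1 - μ i) * g i ^ 2
  set Λ := 3 + log (1 / μ 1) + log (1 / (1 - μ K))
  obtain ⟨c, hc⟩ := exists_intCast_sum_le_mul_sum_mul_exp_neg_abs (Icc 1 K)
    (fun i => μ i * (1 - μ i) * g i ^ 2) (fun i => logit (μ i))
    (fun i hi => mul_nonneg (mul_nonneg (hμ01 i hi).1.le (sub_nonneg.2 (hμ01 i hi).2.le))
      (sq_nonneg _)) hL hlogit
  obtain ⟨A, hAs, hA, hAc⟩ := exists_subset_card_mul_le_modifiedGini (Icc 1 K) ⟨1, h1⟩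
    hμ01 (fun i _ => hg i) c
  refine ⟨A, hA, hAs, ?_⟩
  rw [Nat.card_Icc, Nat.add_sub_cancel] at hAc
  have hlogK := log_natCast_nonneg K
  rw [ge_iff_le, div_le_div_iff₀ (mul_pos (by linarith) (by linarith)) (by simpa using hA.card_pos)]
  calc W * #A ≤ Λ * _ * #A := by gcongr
    _ = Λ * (#A * _) := by ring
    _ ≤ Λ * (modifiedGini μ g A * (1 + log K)) := mul_le_mul_of_nonneg_left hAc (by linarith)
    _ = modifiedGini μ g A * ((1 + log K) * Λ) := by ring
end

section
/- Let n ≥ 1, let p ∈ ℝ^n satisfy 0 = p_0 < p_1 < ⋯ < p_n < 1, and let ε ∈ ℝ^n satisfy max_i |ε_i| ≤ (1/2)·min{ min_{1≤i≤n}(p_i − p_{i−1}), (1−p_n)/n }. Then ∑_{j=1}^n (p_j − p_{j−1})·ln((p_j − p_{j−1})/(p_j − p_{j−1} − ε_j)) + (1−p_n)·ln((1−p_n)/(1−p_n + ∑_{j=1}^n ε_j)) ≤ 2·εᵀ B_KL(p) ε, i.e. the left-hand side is at most 2·( ∑_{j=1}^n ε_j²/(p_j − p_{j−1}) + (∑_{j=1}^n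 ε_j)²/(1−p_n) ). -/
/-!
Each atom contributes `a log (a / (a - e)) ≤ a (a / (a - e) - 1) = a e / (a - e)`, and
`a e / (a - e) ≤ e + 2 e² / a` as soon as `e ≤ a / 2`. The last atom is perturbed by `-∑ εⱼ`,
so the linear terms `e` cancel in the sum and only the quadratic form remains.
-/

open Finset Real

lemma mul_log_div_sub_le {a e : ℝ} (ha : 0 < a) (he : e ≤ a / 2) :
    a * log (a / (a - e)) ≤ e + 2 * e ^ 2 / a := by
  have hae : 0 < a - e := by linarith
  calc a * log (a / (a - e)) ≤ a * (a / (a - e) - 1) :=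
        mul_le_mul_of_nonneg_left (log_le_sub_one_of_pos (by positivity)) ha.le
    _ = e + 2 * e ^ 2 / a - e ^ 2 * (a - 2 * e) / (a * (a - e)) := by
        field_simp
        ring
    _ ≤ e + 2 * e ^ 2 / a := by
        have : 0 ≤ a - 2 * e := by linarith
        have : 0 ≤ e ^ 2 * (a - 2 * e) / (a * (a - e)) := by positivity
        linarith

lemma sum_mul_log_div_sub_add_mul_log_div_add_le {ι : Type*} (s : Finset ι) {a e : ι → ℝ}
    {b : ℝ} (ha : ∀ j ∈ s, 0 < a j) (he : ∀ j ∈ s, e j ≤ a j / 2) (hb : 0 < b)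
    (hsum : -∑ j ∈ s, e j ≤ b / 2) :
    ∑ j ∈ s, a j * log (a j / (a j - e j)) + b * log (b / (b + ∑ j ∈ s, e j))
      ≤ 2 * (∑ j ∈ s, e j ^ 2 / a j + (∑ j ∈ s, e j) ^ 2 / b) := by
  have hatoms : ∑ j ∈ s, a j * log (a j / (a j - e j))
      ≤ ∑ j ∈ s, e j + 2 * ∑ j ∈ s, e j ^ 2 / a j := by
    rw [mul_sum, ← sum_add_distrib]
    exact sum_le_sum fun j hj => (mul_log_div_sub_le (ha j hj) (he j hj)).trans_eq (by ring)
  have hlast := mul_log_div_sub_le hb hsum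
  rw [sub_neg_eq_add, neg_sq, mul_div_assoc] at hlast
  linarith

lemma abs_sum_le_of_abs_le_div_card {ι : Type*} (s : Finset ι) {f : ι → ℝ} {c : ℝ}
    (hc : 0 ≤ c) (hf : ∀ j ∈ s, |f j| ≤ c / #s) : |∑ j ∈ s, f j| ≤ c := by
  rcases s.eq_empty_or_nonempty with rfl | hs
  · simpa using hc
  calc |∑ j ∈ s, f j| ≤ ∑ j ∈ s, |f j| := abs_sum_le_sum_abs _ _
    _ ≤ #s • (c / #s) := sum_le_card_nsmul _ _ _ hf
    _ = c := by rw [nsmul_eq_mul]; field_simp [hs.card_pos.ne']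

theorem kl_div_le_two_quadratic_form_general (n : ℕ) (p ε : ℕ → ℝ)
    (hmono : ∀ i, i < n → p i < p (i + 1))
    (hpn : p n < 1)
    (hε : ∀ j ∈ Finset.Icc 1 n,
      (∀ i ∈ Finset.Icc 1 n, |ε j| ≤ (p i - p (i - 1)) / 2) ∧
      |ε j| ≤ (1 - p n) / (2 * n)) :
    (∑ j ∈ Finset.Icc 1 n,
        (p j - p (j - 1)) * Real.log ((p j - p (j - 1)) / (p j - p (j - 1) - ε j)))
      + (1 - p n) * Real.log ((1 - p n) / (1 - p n + ∑ j ∈ Finset.Icc 1 n, ε j))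
    ≤ 2 * ((∑ j ∈ Finset.Icc 1 n, (ε j) ^ 2 / (p j - p (j - 1)))
        + (∑ j ∈ Finset.Icc 1 n, ε j) ^ 2 / (1 - p n)) := by
  have hgap : ∀ j ∈ Icc 1 n, 0 < p j - p (j - 1) := by
    intro j hj
    obtain ⟨hj1, hjn⟩ := mem_Icc.mp hj
    have := hmono (j - 1) (by omega)
    rw [Nat.sub_add_cancel hj1] at this
    linarith
  have hsum : |∑ j ∈ Icc 1 n, ε j| ≤ (1 - p n) / 2 := by
    refine abs_sum_le_of_abs_le_div_card _ (by linarith) fun j hj => ?_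
    rw [Nat.card_Icc, Nat.add_sub_cancel, div_div]
    exact (hε j hj).2
  refine sum_mul_log_div_sub_add_mul_log_div_add_le _ hgap (fun j hj => ?_) (by linarith)
    ((neg_le_abs _).trans hsum)
  exact (le_abs_self _).trans ((hε j hj).1 j hj)

/-- KL-divergence bound: for `0 = p₀ < p₁ < ⋯ < pₙ < 1` and a perturbation `ε` that is
entrywise small enough, the KL divergence between the perturbed and unperturbed discrete
distributions is bounded by twice the quadratic form `εᵀ B_KL(p) ε`. -/
theorem kl_div_le_two_quadratic_form (n : ℕ) (hn : 1 ≤ n) (p ε : ℕ → ℝ)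
    (hp0 : p 0 = 0)
    (hmono : ∀ i, i < n → p i < p (i + 1))
    (hpn : p n < 1)
    (hε : ∀ j ∈ Finset.Icc 1 n,
      (∀ i ∈ Finset.Icc 1 n, |ε j| ≤ (p i - p (i - 1)) / 2) ∧
      |ε j| ≤ (1 - p n) / (2 * n)) :
    (∑ j ∈ Finset.Icc 1 n,
        (p j - p (j - 1)) * Real.log ((p j - p (j - 1)) / (p j - p (j - 1) - ε j)))
      + (1 - p n) * Real.log ((1 - p n) / (1 - p n + ∑ j ∈ Finset.Icc 1 n, ε j))
    ≤ 2 * ((∑ j ∈ Finset.Icc 1 n, (ε j) ^ 2 / (p j - p (j - 1)))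
        + (∑ j ∈ Finset.Icc 1 n, ε j) ^ 2 / (1 - p n)) :=
  kl_div_le_two_quadratic_form_general n p ε hmono hpn hε
end

section
/- Let n ≥ 1, let p ∈ ℝ^n satisfy 0 = p_0 < p_1 < ⋯ < p_n < 1, and let c ∈ ℝ^n. Then the matrix B_KL(p) is invertible and the vector x ∈ ℝ^n with coordinates x_i = (p_i − p_{i−1})·(c_i − ∑_{j=1}^n (p_j − p_{j−1})·c_j) satisfies B_KL(p)·x = c; that is, (B_KL(p)⁻¹ c)_i = (p_i − p_{i−1})·(c_i − ∑_{j=1}^n (p_j − p_{j−1})·c_j) for every i. -/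
open Matrix

/-- Explicit inverse of `B_KL(p)` applied to a vector: for `0 = p₀ < p₁ < ⋯ < pₙ < 1`,
the matrix `B_KL(p) = D(p) + (1/(1−pₙ))·11ᵀ` (with `D` diagonal, `D_ii = 1/(pᵢ−pᵢ₋₁)`)
is invertible, and the vector `x` with
`xᵢ = (pᵢ−pᵢ₋₁)(cᵢ − ∑ⱼ (pⱼ−pⱼ₋₁)cⱼ)` satisfies `B_KL(p)·x = c` and `B_KL(p)⁻¹·c = x`. -/
theorem bkl_inverse_mulVec (n : ℕ) (hn : 1 ≤ n) (p : ℕ → ℝ) (c : Fin n → ℝ)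
    (hp0 : p 0 = 0)
    (hmono : ∀ i, i < n → p i < p (i + 1))
    (hpn : p n < 1)
    (B : Matrix (Fin n) (Fin n) ℝ)
    (hB : ∀ i j, B i j =
      (if i = j then 1 / (p (i.val + 1) - p i.val) else 0) + 1 / (1 - p n))
    (x : Fin n → ℝ)
    (hx : ∀ i, x i = (p (i.val + 1) - p i.val) *
      (c i - ∑ j, (p (j.val + 1) - p j.val) * c j)) :
    IsUnit B.det ∧ B *ᵥ x = c ∧ B⁻¹ *ᵥ c = x := by
  obtain ⟨d, hdd⟩ : ∃ d : Fin n → ℝ, ∀ i : Fin n, d i = p (i.val + 1) - p i.val :=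
    ⟨_, fun _ => rfl⟩
  have hd : ∀ i : Fin n, d i ≠ 0 := fun i => by
    rw [hdd]; exact ne_of_gt (sub_pos.2 (hmono i.val i.isLt))
  have h1 : (1 : ℝ) - p n ≠ 0 := ne_of_gt (sub_pos.2 hpn)
  have hsum : ∑ i : Fin n, d i = p n := by
    rw [Finset.sum_congr rfl fun i _ => hdd i,
      Fin.sum_univ_eq_sum_range (fun i => p (i + 1) - p i) n,
      Finset.sum_range_sub p n, hp0, sub_zero]
  obtain ⟨s, hs1⟩ : ∃ s : ℝ, s * (1 - p n) = 1 := ⟨1 / (1 - p n), by field_simp⟩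
  have hs_eq : s = 1 / (1 - p n) := eq_one_div_of_mul_eq_one_left hs1
  have hB' : ∀ i j, B i j = (if i = j then 1 / d i else 0) + s := by
    intro i j; rw [hB i j, hdd i, hs_eq]
  obtain ⟨A, hA⟩ : ∃ A : Matrix (Fin n) (Fin n) ℝ,
      ∀ i j, A i j = d i * ((if i = j then 1 else 0) - d j) := ⟨_, fun _ _ => rfl⟩
  have hcolsum : ∀ j : Fin n, ∑ k, A k j = d j * (1 - p n) := by
    intro j
    have : ∀ k : Fin n, A k j = (if k = j then d k else 0) - d k * d j := by
      intro k; rw [hA]; by_cases h : k = j <;> simp [h] <;> ring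
    rw [Finset.sum_congr rfl fun k _ => this k, Finset.sum_sub_distrib,
      Finset.sum_ite_eq' Finset.univ j d, ← Finset.sum_mul, hsum]
    simp; ring
  have hBA : B * A = 1 := by
    ext i j
    rw [Matrix.mul_apply, Matrix.one_apply]
    have expand : ∀ k : Fin n, B i k * A k j =
        (if i = k then (1 / d i) * A k j else 0) + s * A k j := by
      intro k; rw [hB']; by_cases h : i = k <;> simp [h] <;> ring
    rw [Finset.sum_congr rfl fun k _ => expand k, Finset.sum_add_distrib,
      Finset.sum_ite_eq Finset.univ i (fun k => (1 / d i) * A k j),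
      ← Finset.mul_sum, hcolsum]
    simp only [Finset.mem_univ, if_true, hA]
    rw [one_div, inv_mul_cancel_left₀ (hd i)]
    by_cases h : i = j
    · subst h; rw [if_pos rfl]; linear_combination d i * hs1
    · rw [if_neg h]; linear_combination d j * hs1
  have hdet : IsUnit B.det := Matrix.isUnit_det_of_right_inverse hBA
  have hBinv : B⁻¹ = A := Matrix.inv_eq_right_inv hBA
  have hxA : x = A *ᵥ c := by
    funext i
    rw [hx i, Matrix.mulVec, dotProduct]
    have e1 : ∑ j, (p (j.val + 1) - p j.val) * c j = ∑ j, d j * c j :=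
      Finset.sum_congr rfl fun j _ => by rw [hdd]
    have e2 : ∀ j : Fin n, A i j * c j = (if i = j then d i * c j else 0) - d i * (d j * c j) := by
      intro j; rw [hA]; by_cases h : i = j <;> simp [h] <;> ring
    rw [e1, ← hdd i, Finset.sum_congr rfl fun j _ => e2 j, Finset.sum_sub_distrib,
      Finset.sum_ite_eq Finset.univ i (fun j => d i * c j), ← Finset.mul_sum]
    simp; ring
  refine ⟨hdet, ?_, ?_⟩
  · rw [hxA, Matrix.mulVec_mulVec, hBA, Matrix.one_mulVec]
  · rw [hBinv, hxA]
end

section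
/- Let n ≥ 1, let p ∈ ℝ^n satisfy 0 ≤ p_1 ≤ p_2 ≤ ⋯ ≤ p_n ≤ 1 and set p_0 = 0, let g ∈ ℝ^n, and define c ∈ ℝ^n by c_j = ∑_{i=j}^n g_i. Then ∑_{i=1}^n (p_i − p_{i−1})·c_i² − (∑_{i=1}^n (p_i − p_{i−1})·c_i)² = γ̃²(p,g). -/
/-!
Write `aᵢ = pᵢ − pᵢ₋₁`. Summation by parts, using `p₀ = 0` and `cₙ₊₁ = 0`, turns the two moments
into `∑ aᵢ cᵢ = ∑ pᵢ gᵢ` and `∑ aᵢ cᵢ² = ∑ pᵢ (gᵢ² + 2 gᵢ cᵢ₊₁)` (since `cᵢ² − cᵢ₊₁² = gᵢ (gᵢ + 2cᵢ₊₁)`).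
Expanding `(∑ pᵢ gᵢ)²` into its diagonal and upper-triangular parts and writing
`cᵢ₊₁ = ∑_{j>i} gⱼ`, the difference collects to `∑ pᵢ(1−pᵢ)gᵢ² + 2∑_{i<j} pᵢ(1−pⱼ)gᵢgⱼ`.
-/

open Finset

section CommRing

variable {R : Type*} [CommRing R]

theorem sum_Icc_one_by_parts (p F : ℕ → R) (n : ℕ) :
    ∑ i ∈ Icc 1 n, (p i - p (i - 1)) * F i
      = ∑ i ∈ Icc 1 n, p i * (F i - F (i + 1)) + p n * F (n + 1) - p 0 * F 1 := by
  induction n with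
  | zero => simp
  | succ n ih =>
    rw [sum_Icc_succ_top (by omega), sum_Icc_succ_top (by omega), ih, Nat.add_sub_cancel]
    ring

theorem sum_Icc_one_by_parts_of_boundary {p F : ℕ → R} {n : ℕ} (hp : p 0 = 0)
    (hF : F (n + 1) = 0) :
    ∑ i ∈ Icc 1 n, (p i - p (i - 1)) * F i = ∑ i ∈ Icc 1 n, p i * (F i - F (i + 1)) := by
  rw [sum_Icc_one_by_parts, hp, hF]
  ring

theorem sq_sum_Icc_one (f : ℕ → R) (n : ℕ) :
    (∑ i ∈ Icc 1 n, f i) ^ 2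
      = ∑ i ∈ Icc 1 n, f i ^ 2 + 2 * ∑ i ∈ Icc 1 n, f i * ∑ j ∈ Icc (i + 1) n, f j := by
  induction n with
  | zero => simp
  | succ n ih =>
    have tails : ∀ i ∈ Icc 1 n, f i * ∑ j ∈ Icc (i + 1) (n + 1), f j
        = f i * ∑ j ∈ Icc (i + 1) n, f j + f i * f (n + 1) := fun i hi => by
      rw [sum_Icc_succ_top (by simp at hi; omega), mul_add]
    rw [sum_Icc_succ_top (by omega) f, sum_Icc_succ_top (by omega) (f · ^ 2),
      sum_Icc_succ_top (by omega), sum_congr rfl tails, sum_add_distrib, ← sum_mul,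
      Icc_eq_empty (show ¬n + 1 + 1 ≤ n + 1 by omega), sum_empty, add_sq, ih]
    ring

end CommRing

theorem sum_Icc_eq_add_sum_Icc_succ {M : Type*} [AddCommMonoid M] (g : ℕ → M) {i n : ℕ}
    (h : i ≤ n) : ∑ j ∈ Icc i n, g j = g i + ∑ j ∈ Icc (i + 1) n, g j := by
  rw [Icc_eq_cons_Ioc h, sum_cons, ← Icc_add_one_left_eq_Ioc]

theorem variance_eq_modified_gini_general (n : ℕ) (p g c : ℕ → ℝ)
    (hp0 : p 0 = 0)
    (hc : ∀ j, c j = ∑ i ∈ Finset.Icc j n, g i) :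
    (∑ i ∈ Finset.Icc 1 n, (p i - p (i - 1)) * (c i) ^ 2)
      - (∑ i ∈ Finset.Icc 1 n, (p i - p (i - 1)) * c i) ^ 2
    = (∑ i ∈ Finset.Icc 1 n, p i * (1 - p i) * (g i) ^ 2)
      + 2 * ∑ i ∈ Finset.Icc 1 n, ∑ j ∈ Finset.Icc (i + 1) n,
          p i * (1 - p j) * (g i * g j) := by
  have hc_end : c (n + 1) = 0 := by rw [hc, Icc_eq_empty (by omega), sum_empty]
  have hc_step : ∀ i ∈ Icc 1 n, c i = g i + c (i + 1) := fun i hi => by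
    rw [hc, hc, sum_Icc_eq_add_sum_Icc_succ g (mem_Icc.mp hi).2]
  have first_moment : ∑ i ∈ Icc 1 n, (p i - p (i - 1)) * c i = ∑ i ∈ Icc 1 n, p i * g i := by
    rw [sum_Icc_one_by_parts_of_boundary hp0 hc_end]
    exact sum_congr rfl fun i hi => by rw [hc_step i hi]; ring
  have second_moment : ∑ i ∈ Icc 1 n, (p i - p (i - 1)) * c i ^ 2
      = ∑ i ∈ Icc 1 n, (p i * g i ^ 2 + 2 * (p i * g i * c (i + 1))) := by
    rw [sum_Icc_one_by_parts_of_boundary (F := (c · ^ 2)) hp0 (by simp [hc_end])]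
    exact sum_congr rfl fun i hi => by rw [hc_step i hi]; ring
  have cross_terms : ∀ i, ∑ j ∈ Icc (i + 1) n, p i * (1 - p j) * (g i * g j)
      = p i * g i * c (i + 1) - p i * g i * ∑ j ∈ Icc (i + 1) n, p j * g j := fun i => by
    rw [hc, mul_sum, mul_sum, ← sum_sub_distrib]
    exact sum_congr rfl fun j _ => by ring
  rw [second_moment, first_moment, sq_sum_Icc_one, sum_congr rfl fun i _ => cross_terms i]
  simp only [sum_add_distrib, sum_sub_distrib, ← mul_sum]
  have diagonal : ∀ i, p i * (1 - p i) * g i ^ 2 = p i * g i ^ 2 - (p i * g i) ^ 2 := fun i => by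
    ring
  simp only [diagonal, sum_sub_distrib]
  ring

/-- Variance identity for the modified Gini-weighted smoothness: for `0 ≤ p₁ ≤ ⋯ ≤ pₙ ≤ 1`
(with `p₀ = 0`) and `c_j = ∑_{i=j}^n g_i`,
`∑ᵢ (pᵢ−pᵢ₋₁)cᵢ² − (∑ᵢ (pᵢ−pᵢ₋₁)cᵢ)² = γ̃²(p,g)`. -/
theorem variance_eq_modified_gini (n : ℕ) (hn : 1 ≤ n) (p g c : ℕ → ℝ)
    (hp0 : p 0 = 0)
    (hp1 : 0 ≤ p 1)
    (hmono : ∀ i, 1 ≤ i → i < n → p i ≤ p (i + 1))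
    (hpn : p n ≤ 1)
    (hc : ∀ j, c j = ∑ i ∈ Finset.Icc j n, g i) :
    (∑ i ∈ Finset.Icc 1 n, (p i - p (i - 1)) * (c i) ^ 2)
      - (∑ i ∈ Finset.Icc 1 n, (p i - p (i - 1)) * c i) ^ 2
    = (∑ i ∈ Finset.Icc 1 n, p i * (1 - p i) * (g i) ^ 2)
      + 2 * ∑ i ∈ Finset.Icc 1 n, ∑ j ∈ Finset.Icc (i + 1) n,
          p i * (1 - p j) * (g i * g j) :=
  variance_eq_modified_gini_general n p g c hp0 hc
end

section
/- Let n ≥ 1, let p ∈ ℝ^n satisfy 0 = p_0 < p_1 < ⋯ < p_n < 1, let g ∈ ℝ^n and define c ∈ ℝ^n by c_j = ∑_{i=j}^n g_i. Then for every ε ∈ ℝ^n, ⟨c,ε⟩² ≤ γ̃²(p,g) · (εᵀ B_KL(p) ε); moreover B_KL(p) is positive definite, and equality is attained for ε = B_KL(p)⁻¹ c. -/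
/-!
Write `d i = p i - p (i - 1)`, so that `p n = ∑ d` and `B_KL(p) = diag (1 / d) + 11ᵀ / (1 - ∑ d)`,
which is positive definite. The vector `u i = d i * (c i - ∑ j, d j * c j)` solves `B_KL(p) u = c`,
and exchanging the order of summation (`∑_{k ≤ min i j} d k = p (min i j)`) gives
`c ⬝ᵥ u = ∑ d c² - (∑ d c)² = γ̃²(p,g)`. The inequality is Cauchy–Schwarz for the inner product
`xᵀ B_KL(p) y` applied to `ε` and `u`, with equality at `ε = u = B_KL(p)⁻¹ c`.
-/

open Matrix Finset

theorem Finset.sum_sum_eq_sum_add_two_mul_sum_Ioi {ι R : Type*} [Fintype ι] [LinearOrder ι]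
    [LocallyFiniteOrderTop ι] [CommSemiring R] (F : ι → ι → R) (hF : ∀ i j, F i j = F j i) :
    ∑ i, ∑ j, F i j = ∑ i, F i i + 2 * ∑ i, ∑ j ∈ Ioi i, F i j := by
  have hrow (i : ι) : ∑ j, F i j = ∑ j ∈ {j | j < i}, F i j + (F i i + ∑ j ∈ Ioi i, F i j) := by
    rw [← sum_filter_add_sum_filter_not univ (· < i), add_sum_Ioi_eq_sum_Ici]
    congr 2
    ext j; simp
  have hlower : ∑ i, ∑ j ∈ {j | j < i}, F i j = ∑ i, ∑ j ∈ Ioi i, F i j := by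
    rw [sum_comm' (t' := univ) (s' := Ioi) (by simp)]
    exact sum_congr rfl fun i _ => sum_congr rfl fun j _ => hF j i
  simp only [hrow, sum_add_distrib, hlower]
  ring

section TailSums

variable {ι R : Type*} [Fintype ι] [LinearOrder ι] [LocallyFiniteOrderTop ι]
  [LocallyFiniteOrderBot ι] [CommRing R] (d g : ι → R)

theorem sum_mul_sum_Ici_eq_sum_sum_Iic_mul :
    ∑ k, d k * ∑ i ∈ Ici k, g i = ∑ i, (∑ k ∈ Iic i, d k) * g i := by
  simp only [mul_sum, sum_mul]
  exact sum_comm' (by simp)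

theorem sum_mul_sq_sum_Ici_eq_sum_sum_Iic_min :
    ∑ k, d k * (∑ i ∈ Ici k, g i) ^ 2 =
      ∑ i, ∑ j, (∑ k ∈ Iic (min i j), d k) * (g i * g j) := by
  have hsq (k : ι) : d k * (∑ i ∈ Ici k, g i) ^ 2 = ∑ i ∈ Ici k, ∑ j ∈ Ici k, d k * (g i * g j) := by
    rw [sq, sum_mul_sum]; simp only [mul_sum]
  calc ∑ k, d k * (∑ i ∈ Ici k, g i) ^ 2
      = ∑ k, ∑ i ∈ Ici k, ∑ j ∈ Ici k, d k * (g i * g j) := by simp only [hsq]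
    _ = ∑ i, ∑ k ∈ Iic i, ∑ j ∈ Ici k, d k * (g i * g j) := sum_comm' (by simp)
    _ = ∑ i, ∑ j, ∑ k ∈ Iic (min i j), d k * (g i * g j) :=
      sum_congr rfl fun i _ => sum_comm' (by simp)
    _ = ∑ i, ∑ j, (∑ k ∈ Iic (min i j), d k) * (g i * g j) := by simp only [sum_mul]

theorem sum_mul_sq_sum_Ici_sub_sq {P : ι → R} (hP : ∀ i, ∑ k ∈ Iic i, d k = P i) :
    ∑ k, d k * (∑ i ∈ Ici k, g i) ^ 2 - (∑ k, d k * ∑ i ∈ Ici k, g i) ^ 2 =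
      ∑ i, P i * (1 - P i) * g i ^ 2 + 2 * ∑ i, ∑ j ∈ Ioi i, P i * (1 - P j) * (g i * g j) := by
  rw [sum_mul_sq_sum_Ici_eq_sum_sum_Iic_min, sum_mul_sum_Ici_eq_sum_sum_Iic_mul, sq,
    sum_mul_sum, ← sum_sub_distrib]
  simp only [hP, ← sum_sub_distrib]
  rw [sum_sum_eq_sum_add_two_mul_sum_Ioi _ fun i j => by rw [min_comm]; ring]
  congr 1
  · exact sum_congr rfl fun i _ => by rw [min_self]; ring
  · refine congrArg _ (sum_congr rfl fun i _ => sum_congr rfl fun j hj => ?_)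
    rw [min_eq_left (mem_Ioi.1 hj).le]; ring

end TailSums

theorem Matrix.PosSemidef.dotProduct_sq_le_of_mulVec_eq {n : Type*} [Fintype n]
    {A : Matrix n n ℝ} (hA : A.PosSemidef) {u c : n → ℝ} (hu : A *ᵥ u = c) (x : n → ℝ) :
    (c ⬝ᵥ x) ^ 2 ≤ (c ⬝ᵥ u) * (x ⬝ᵥ A *ᵥ x) := by
  let _ := A.toSeminormedAddCommGroup hA
  let _ := A.toInnerProductSpace hA
  have hinner (y z : n → ℝ) : inner ℝ y z = (A *ᵥ z) ⬝ᵥ y := by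
    change (A *ᵥ z) ⬝ᵥ star y = _
    rw [star_trivial]
  have h := real_inner_mul_inner_self_le x u
  rw [hinner, hinner, hinner, hu, dotProduct_comm (A *ᵥ x)] at h
  linarith

theorem dotProduct_mul_sub_sum_mul {ι R : Type*} [Fintype ι] [CommRing R] (d c : ι → R) :
    c ⬝ᵥ (fun i => d i * (c i - ∑ j, d j * c j)) = ∑ i, d i * c i ^ 2 - (∑ i, d i * c i) ^ 2 := by
  simp only [dotProduct, mul_sub, sum_sub_distrib, sq, mul_left_comm (c _), ← mul_assoc, ← sum_mul]

section KLMatrix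

variable {ι : Type*} [Fintype ι] [DecidableEq ι] (d : ι → ℝ)

/-- `B_KL(p)` in terms of the increments `d i = p i - p (i - 1)`, so that `p n = ∑ i, d i`. -/
noncomputable def klMatrix : Matrix ι ι ℝ :=
  diagonal (fun i => 1 / d i) + of fun _ _ => 1 / (1 - ∑ i, d i)

theorem klMatrix_posDef (hd : ∀ i, 0 < d i) (hd1 : ∑ i, d i < 1) : (klMatrix d).PosDef := by
  refine (posDef_diagonal_iff.2 fun i => one_div_pos.2 (hd i)).add_posSemidef ?_
  have h := (posSemidef_vecMulVec_self_star (1 : ι → ℝ)).smul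
    (one_div_pos.2 (sub_pos.2 hd1)).le
  convert h using 1
  ext i j; simp

theorem klMatrix_mulVec_apply (v : ι → ℝ) (i : ι) :
    (klMatrix d *ᵥ v) i = v i / d i + (∑ j, v j) / (1 - ∑ j, d j) := by
  simp only [klMatrix, add_mulVec, Pi.add_apply, mulVec_diagonal]
  simp only [mulVec, dotProduct, of_apply, ← mul_sum]
  ring

theorem klMatrix_mulVec_eq (hd : ∀ i, d i ≠ 0) (hd1 : ∑ i, d i ≠ 1) (c : ι → ℝ) :
    klMatrix d *ᵥ (fun i => d i * (c i - ∑ j, d j * c j)) = c := by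
  have hsum : ∑ j, d j * (c j - ∑ k, d k * c k) = (1 - ∑ i, d i) * ∑ k, d k * c k := by
    simp only [mul_sub, sum_sub_distrib, ← sum_mul]
    ring
  ext i
  rw [klMatrix_mulVec_apply, hsum, mul_div_cancel_left₀ _ (hd i),
    mul_div_cancel_left₀ _ (sub_ne_zero.2 hd1.symm)]
  ring

end KLMatrix

theorem dotProduct_sq_le_modified_gini_mul_quadForm_general (n : ℕ)
    (p : ℕ → ℝ) (g c : Fin n → ℝ)
    (hp0 : p 0 = 0)
    (hmono : ∀ i, i < n → p i < p (i + 1))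
    (hpn : p n < 1)
    (hc : ∀ j, c j = ∑ i ∈ Finset.Ici j, g i)
    (B : Matrix (Fin n) (Fin n) ℝ)
    (hB : ∀ i j, B i j =
      (if i = j then 1 / (p (i.val + 1) - p i.val) else 0) + 1 / (1 - p n))
    (γ : ℝ)
    (hγ : γ = (∑ i, p (i.val + 1) * (1 - p (i.val + 1)) * (g i) ^ 2)
      + 2 * ∑ i, ∑ j ∈ Finset.Ioi i,
          p (i.val + 1) * (1 - p (j.val + 1)) * (g i * g j)) :
    (∀ ε : Fin n → ℝ, (c ⬝ᵥ ε) ^ 2 ≤ γ * (ε ⬝ᵥ (B *ᵥ ε))) ∧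
    B.PosDef ∧
    (c ⬝ᵥ (B⁻¹ *ᵥ c)) ^ 2 = γ * ((B⁻¹ *ᵥ c) ⬝ᵥ (B *ᵥ (B⁻¹ *ᵥ c))) := by
  set d : Fin n → ℝ := fun i => p (i + 1) - p i
  have hd (i : Fin n) : 0 < d i := sub_pos.2 (hmono i i.isLt)
  have hsum : ∑ i, d i = p n := by
    rw [Fin.sum_univ_eq_sum_range (fun k => p (k + 1) - p k), sum_range_sub, hp0, sub_zero]
  have hprefix (i : Fin n) : ∑ k ∈ Iic i, d k = p (i + 1) := by
    simpa [d, hp0] using Fin.sum_Iic_sub i fun k : Fin (n + 1) => p k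
  have hBd : B = klMatrix d := by
    ext i j
    rw [hB, klMatrix, hsum]
    simp [diagonal_apply, d]
  have hpos : B.PosDef := hBd ▸ klMatrix_posDef d hd (hsum ▸ hpn)
  set u : Fin n → ℝ := fun i => d i * (c i - ∑ j, d j * c j)
  have hBu : B *ᵥ u = c :=
    hBd ▸ klMatrix_mulVec_eq d (fun i => (hd i).ne') (hsum ▸ hpn.ne) c
  have hcu : c ⬝ᵥ u = γ := by
    have h := sum_mul_sq_sum_Ici_sub_sq d g hprefix
    simp only [← hc] at h
    rw [hγ, ← h, dotProduct_mul_sub_sum_mul]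
  have hinv : B⁻¹ *ᵥ c = u := by
    rw [← hBu, mulVec_mulVec, nonsing_inv_mul B hpos.det_pos.ne'.isUnit, one_mulVec]
  refine ⟨fun ε => hcu ▸ hpos.posSemidef.dotProduct_sq_le_of_mulVec_eq hBu ε, hpos, ?_⟩
  rw [hinv, hBu, dotProduct_comm u, hcu, sq]

/-- Cauchy–Schwarz property of the modified Gini-weighted smoothness: for
`0 = p₀ < p₁ < ⋯ < pₙ < 1` and `c_j = ∑_{i=j}^n g_i`, one has
`⟨c,ε⟩² ≤ γ̃²(p,g)·(εᵀ B_KL(p) ε)` for every `ε`, the matrix `B_KL(p)` is positive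
definite, and equality holds for `ε = B_KL(p)⁻¹ c`. -/
theorem dotProduct_sq_le_modified_gini_mul_quadForm (n : ℕ) (hn : 1 ≤ n)
    (p : ℕ → ℝ) (g c : Fin n → ℝ)
    (hp0 : p 0 = 0)
    (hmono : ∀ i, i < n → p i < p (i + 1))
    (hpn : p n < 1)
    (hc : ∀ j, c j = ∑ i ∈ Finset.Ici j, g i)
    (B : Matrix (Fin n) (Fin n) ℝ)
    (hB : ∀ i j, B i j =
      (if i = j then 1 / (p (i.val + 1) - p i.val) else 0) + 1 / (1 - p n))
    (γ : ℝ)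
    (hγ : γ = (∑ i, p (i.val + 1) * (1 - p (i.val + 1)) * (g i) ^ 2)
      + 2 * ∑ i, ∑ j ∈ Finset.Ioi i,
          p (i.val + 1) * (1 - p (j.val + 1)) * (g i * g j)) :
    (∀ ε : Fin n → ℝ, (c ⬝ᵥ ε) ^ 2 ≤ γ * (ε ⬝ᵥ (B *ᵥ ε))) ∧
    B.PosDef ∧
    (c ⬝ᵥ (B⁻¹ *ᵥ c)) ^ 2 = γ * ((B⁻¹ *ᵥ c) ⬝ᵥ (B *ᵥ (B⁻¹ *ᵥ c))) :=
  dotProduct_sq_le_modified_gini_mul_quadForm_general n p g c hp0 hmono hpn hc B hB γ hγ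
end

section
/- For all real numbers x, y with 0 ≤ x ≤ 1/2 and 0 ≤ y ≤ 1/2, (√(y(1−y)) − √(x(1−x)))² ≤ (√y − √x)². -/
lemma sqrt_gini_aux (x y : ℝ) (hx0 : 0 ≤ x) (hxy : x ≤ y) (hy : y ≤ 1 / 2) :
    (Real.sqrt (y * (1 - y)) - Real.sqrt (x * (1 - x))) ^ 2
      ≤ (Real.sqrt y - Real.sqrt x) ^ 2 := by
  have hy0 : 0 ≤ y := le_trans hx0 hxy
  have h1y : (0:ℝ) ≤ 1 - y := by linarith
  have h1x : (0:ℝ) ≤ 1 - x := by linarith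
  have hsx : Real.sqrt x ≤ Real.sqrt y := Real.sqrt_le_sqrt hxy
  have hs1 : Real.sqrt (1 - y) ≤ Real.sqrt (1 - x) := Real.sqrt_le_sqrt (by linarith)
  have h1xle : Real.sqrt (1 - x) ≤ 1 := Real.sqrt_le_one.mpr (by linarith)
  have hmul : Real.sqrt x * (1 - Real.sqrt (1 - x))
      ≤ Real.sqrt y * (1 - Real.sqrt (1 - y)) :=
    mul_le_mul hsx (by linarith) (by linarith) (Real.sqrt_nonneg y)
  have key : Real.sqrt (y * (1 - y)) - Real.sqrt (x * (1 - x))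
      ≤ Real.sqrt y - Real.sqrt x := by
    rw [Real.sqrt_mul hy0, Real.sqrt_mul hx0]
    nlinarith [hmul]
  have hnn : 0 ≤ Real.sqrt (y * (1 - y)) - Real.sqrt (x * (1 - x)) := by
    have : x * (1 - x) ≤ y * (1 - y) := by nlinarith
    have := Real.sqrt_le_sqrt this
    linarith
  have hbnn : 0 ≤ Real.sqrt y - Real.sqrt x := by linarith
  exact sq_le_sq' (by linarith) key

/-- For `x, y ∈ [0, 1/2]`, `(√(y(1−y)) − √(x(1−x)))² ≤ (√y − √x)²`. -/
theorem sqrt_gini_diff_sq_le_left (x y : ℝ) (hx0 : 0 ≤ x) (hx : x ≤ 1 / 2)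
    (hy0 : 0 ≤ y) (hy : y ≤ 1 / 2) :
    (Real.sqrt (y * (1 - y)) - Real.sqrt (x * (1 - x))) ^ 2
      ≤ (Real.sqrt y - Real.sqrt x) ^ 2 := by
  rcases le_total x y with h | h
  · exact sqrt_gini_aux x y hx0 h hy
  · rw [show (Real.sqrt (y * (1 - y)) - Real.sqrt (x * (1 - x))) ^ 2
        = (Real.sqrt (x * (1 - x)) - Real.sqrt (y * (1 - y))) ^ 2 by ring,
      show (Real.sqrt y - Real.sqrt x) ^ 2 = (Real.sqrt x - Real.sqrt y) ^ 2 by ring]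
    exact sqrt_gini_aux y x hy0 h hx
end

section
/- Let K ≥ 1 and define μ ∈ ℝ^K by μ_i = 2^{−2(K−i)−1} and g ∈ ℝ^K by g_i = 2^{K−i} for i ∈ {1,…,K}. Then for every subset A ⊆ {1,…,K}, ∑_{i∈A} μ_i(1−μ_i)g_i² + 2∑_{i<j, i,j∈A} μ_i(1−μ_j)g_i g_j ≤ 2|A|. -/
/-!
Since `μᵢ gᵢ² = 1/2` for every `i`, each diagonal term is at most `1/2`. The weights `gᵢ = 2^{K−i}`
are superincreasing: the `gⱼ` with `j > i` sum to less than `gᵢ`. Dropping the factors `1 − μⱼ ≤ 1`,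
the cross terms of row `i` are therefore at most `μᵢ gᵢ ∑_{j>i} gⱼ ≤ μᵢ gᵢ² = 1/2`, so
`γ̃²(A) ≤ |A|/2 + 2 · |A|/2 ≤ 2|A|`.
-/

open Finset

noncomputable def restrictedModifiedGini (μ g : ℕ → ℝ) (A : Finset ℕ) : ℝ :=
  (∑ i ∈ A, μ i * (1 - μ i) * g i ^ 2)
    + 2 * ∑ i ∈ A, ∑ j ∈ A.filter (fun j => i < j), μ i * (1 - μ j) * (g i * g j)

section Superincreasing

variable {μ g : ℕ → ℝ} {A : Finset ℕ} {c : ℝ}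

lemma gini_diag_le (i : ℕ) : μ i * (1 - μ i) * g i ^ 2 ≤ μ i * g i ^ 2 := by
  nlinarith [sq_nonneg (μ i * g i)]

lemma gini_row_le (hμ : ∀ i ∈ A, 0 ≤ μ i) (hg : ∀ i ∈ A, 0 ≤ g i)
    (hsuper : ∀ i ∈ A, ∑ j ∈ A.filter (fun j => i < j), g j ≤ g i) {i : ℕ} (hi : i ∈ A) :
    ∑ j ∈ A.filter (fun j => i < j), μ i * (1 - μ j) * (g i * g j) ≤ μ i * g i ^ 2 := by
  have hμg : 0 ≤ μ i * g i := mul_nonneg (hμ i hi) (hg i hi)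
  calc ∑ j ∈ A.filter (fun j => i < j), μ i * (1 - μ j) * (g i * g j)
      ≤ ∑ j ∈ A.filter (fun j => i < j), μ i * g i * g j := by
        refine sum_le_sum fun j hj => ?_
        have hj := (mem_filter.mp hj).1
        nlinarith [mul_nonneg (mul_nonneg hμg (hμ j hj)) (hg j hj)]
    _ = μ i * g i * ∑ j ∈ A.filter (fun j => i < j), g j := (mul_sum ..).symm
    _ ≤ μ i * g i * g i := mul_le_mul_of_nonneg_left (hsuper i hi) hμg
    _ = μ i * g i ^ 2 := by ring

theorem restrictedModifiedGini_le_of_superincreasing (hμ : ∀ i ∈ A, 0 ≤ μ i)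
    (hg : ∀ i ∈ A, 0 ≤ g i) (hc : ∀ i ∈ A, μ i * g i ^ 2 ≤ c)
    (hsuper : ∀ i ∈ A, ∑ j ∈ A.filter (fun j => i < j), g j ≤ g i) :
    restrictedModifiedGini μ g A ≤ 3 * c * #A := by
  have hdiag : ∑ i ∈ A, μ i * (1 - μ i) * g i ^ 2 ≤ #A • c :=
    sum_le_card_nsmul _ _ _ fun i hi => (gini_diag_le i).trans (hc i hi)
  have hrows : ∑ i ∈ A, ∑ j ∈ A.filter (fun j => i < j), μ i * (1 - μ j) * (g i * g j)
      ≤ #A • c :=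
    sum_le_card_nsmul _ _ _ fun i hi => (gini_row_le hμ hg hsuper hi).trans (hc i hi)
  rw [nsmul_eq_mul] at hdiag hrows
  unfold restrictedModifiedGini
  linarith

end Superincreasing

lemma half_pow_mul_two_pow_sq (n : ℕ) : (1 / 2 : ℝ) ^ (2 * n + 1) * (2 ^ n) ^ 2 = 1 / 2 := by
  rw [pow_succ, pow_mul', mul_right_comm, ← mul_pow, ← mul_pow]
  norm_num

lemma sum_two_pow_sub_lt {S : Finset ℕ} {i K : ℕ} (hS : ∀ j ∈ S, i < j ∧ j ≤ K) :
    ∑ j ∈ S, 2 ^ (K - j) < 2 ^ (K - i) := by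
  rw [← sum_image (g := fun j => K - j) fun j hj k hk h => by
    have := hS j hj; have := hS k hk; simp only at h; omega]
  refine Nat.geomSum_lt le_rfl fun m hm => ?_
  obtain ⟨j, hj, rfl⟩ := mem_image.mp hm
  have := hS j hj
  omega

theorem modified_gini_tightness_upper_general (K : ℕ) (μ g : ℕ → ℝ)
    (hμ : ∀ i ∈ Finset.Icc 1 K, μ i = (1 / 2 : ℝ) ^ (2 * (K - i) + 1))
    (hg : ∀ i ∈ Finset.Icc 1 K, g i = (2 : ℝ) ^ (K - i))
    (A : Finset ℕ) (hA : A ⊆ Finset.Icc 1 K) :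
    (∑ i ∈ A, μ i * (1 - μ i) * (g i) ^ 2)
      + 2 * ∑ i ∈ A, ∑ j ∈ A.filter (fun j => i < j), μ i * (1 - μ j) * (g i * g j)
    ≤ 2 * A.card := by
  have hsuper : ∀ i ∈ A, ∑ j ∈ A.filter (fun j => i < j), g j ≤ g i := by
    intro i hi
    have hlt := sum_two_pow_sub_lt (S := A.filter (fun j => i < j)) (i := i) (K := K)
      fun j hj => ⟨(mem_filter.mp hj).2, (mem_Icc.mp (hA (mem_filter.mp hj).1)).2⟩
    rw [sum_congr rfl fun j hj => hg j (hA (mem_filter.mp hj).1), hg i (hA hi)]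
    exact_mod_cast hlt.le
  have hbound := restrictedModifiedGini_le_of_superincreasing (μ := μ) (A := A) (c := 1 / 2)
    (fun i hi => by rw [hμ i (hA hi)]; positivity) (fun i hi => by rw [hg i (hA hi)]; positivity)
    (fun i hi => by rw [hμ i (hA hi), hg i (hA hi), half_pow_mul_two_pow_sq]) hsuper
  unfold restrictedModifiedGini at hbound
  linarith [(#A).cast_nonneg (α := ℝ)]

/-- Tightness example, upper bound: with `μᵢ = 2^{−2(K−i)−1}` and `gᵢ = 2^{K−i}`, for every
subset `A ⊆ {1,…,K}` the restricted modified Gini-weighted smoothness satisfies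
`γ̃²(A) ≤ 2|A|`. -/
theorem modified_gini_tightness_upper (K : ℕ) (hK : 1 ≤ K) (μ g : ℕ → ℝ)
    (hμ : ∀ i ∈ Finset.Icc 1 K, μ i = (1 / 2 : ℝ) ^ (2 * (K - i) + 1))
    (hg : ∀ i ∈ Finset.Icc 1 K, g i = (2 : ℝ) ^ (K - i))
    (A : Finset ℕ) (hA : A ⊆ Finset.Icc 1 K) :
    (∑ i ∈ A, μ i * (1 - μ i) * (g i) ^ 2)
      + 2 * ∑ i ∈ A, ∑ j ∈ A.filter (fun j => i < j), μ i * (1 - μ j) * (g i * g j)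
    ≤ 2 * A.card :=
  modified_gini_tightness_upper_general K μ g hμ hg A hA
end

section
/- Let n ≥ 1 and define x ∈ ℝ^n by x_i = √i − √(i−1) for i ∈ {1,…,n}. Then for every nonempty subset A ⊆ {1,…,n}, (∑_{i∈A} x_i)² ≤ |A|; equivalently, max over nonempty A ⊆ {1,…,n} of (1/|A|)·(∑_{i∈A} x_i)² equals 1, the maximum being attained by A = {1,…,d} for any d. -/
/-!
Since `√i - √(i - 1) = 1 / (√i + √(i - 1))`, the coordinates are positive and decreasing, so among
all index sets of a given size `k` the initial segment `{1, …, k}` has the largest sum, and that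
sum telescopes to `√k`.
-/

open Finset

namespace Real

lemma sqrt_sub_sqrt_sub_one_eq_inv {t : ℝ} (ht : 1 ≤ t) :
    √t - √(t - 1) = (√t + √(t - 1))⁻¹ := by
  refine eq_inv_of_mul_eq_one_left ?_
  linear_combination sq_sqrt (by linarith : 0 ≤ t) - sq_sqrt (by linarith : 0 ≤ t - 1)

lemma sqrt_sub_sqrt_sub_one_antitoneOn :
    AntitoneOn (fun t : ℝ ↦ √t - √(t - 1)) (Set.Ici 1) := by
  intro s hs t _ hst
  simp only [sqrt_sub_sqrt_sub_one_eq_inv hs, sqrt_sub_sqrt_sub_one_eq_inv (hs.trans hst)]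
  have hs' : (1 : ℝ) ≤ s := hs
  exact inv_anti₀ (by positivity)
    (add_le_add (sqrt_le_sqrt hst) (sqrt_le_sqrt (by linarith)))

lemma sqrt_sub_one_le_sqrt (t : ℝ) : √(t - 1) ≤ √t :=
  sqrt_le_sqrt (by linarith)

lemma sum_Icc_sqrt_sub_sqrt_sub_one (d : ℕ) :
    ∑ i ∈ Icc 1 d, (√i - √((i : ℝ) - 1)) = √d := by
  induction d with
  | zero => simp
  | succ d ih =>
    rw [sum_Icc_succ_top (by omega), ih]
    push_cast
    rw [add_sub_cancel_right, add_sub_cancel]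

end Real

lemma Finset.sum_le_sum_Icc_card_of_antitoneOn {x : ℕ → ℝ} (hx : AntitoneOn x (Set.Ici 1))
    (A : Finset ℕ) (hA : ∀ i ∈ A, 1 ≤ i) : ∑ i ∈ A, x i ≤ ∑ i ∈ Icc 1 #A, x i := by
  induction A using Finset.induction_on_max with
  | empty => simp
  | insert a s hlt ih =>
    have ha : a ∉ s := fun h ↦ (hlt a h).false
    have hs_pos : ∀ i ∈ s, 1 ≤ i := fun i hi ↦ hA i (mem_insert_of_mem hi)
    have hcard : #s + 1 ≤ a := by
      have hsub : insert a s ⊆ Icc 1 a := fun i hi ↦ by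
        rcases mem_insert.mp hi with rfl | hi
        · exact mem_Icc.mpr ⟨hA i (mem_insert_self i s), le_rfl⟩
        · exact mem_Icc.mpr ⟨hs_pos i hi, (hlt i hi).le⟩
      simpa [card_insert_of_notMem ha] using card_le_card hsub
    rw [sum_insert ha, card_insert_of_notMem ha, sum_Icc_succ_top (by omega), add_comm]
    exact add_le_add (ih hs_pos)
      (hx (Set.mem_Ici.mpr (by omega)) (Set.mem_Ici.mpr (by omega)) hcard)

theorem prefix_sqrt_vector_max_ratio_general (n : ℕ) (x : ℕ → ℝ)
    (hx : ∀ i, x i = Real.sqrt i - Real.sqrt ((i : ℝ) - 1)) :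
    (∀ A : Finset ℕ, A.Nonempty → A ⊆ Finset.Icc 1 n →
      (∑ i ∈ A, x i) ^ 2 ≤ (A.card : ℝ)) ∧
    (∀ d, 1 ≤ d → d ≤ n →
      (∑ i ∈ Finset.Icc 1 d, x i) ^ 2 = ((Finset.Icc 1 d).card : ℝ)) := by
  obtain rfl : x = fun i : ℕ ↦ Real.sqrt i - Real.sqrt ((i : ℝ) - 1) := funext hx
  refine ⟨fun A _ hA ↦ ?_, fun d _ _ ↦ ?_⟩
  · have hanti : AntitoneOn (fun i : ℕ ↦ Real.sqrt i - Real.sqrt ((i : ℝ) - 1)) (Set.Ici 1) :=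
      fun s hs t ht hst ↦ Real.sqrt_sub_sqrt_sub_one_antitoneOn
        (Set.mem_Ici.mpr (Nat.one_le_cast.mpr hs)) (Set.mem_Ici.mpr (Nat.one_le_cast.mpr ht))
        (Nat.cast_le.mpr hst)
    have hle := sum_le_sum_Icc_card_of_antitoneOn hanti A
      fun i hi ↦ (mem_Icc.mp (hA hi)).1
    rw [Real.sum_Icc_sqrt_sub_sqrt_sub_one] at hle
    have hnonneg : 0 ≤ ∑ i ∈ A, (Real.sqrt i - Real.sqrt ((i : ℝ) - 1)) :=
      sum_nonneg fun i _ ↦ sub_nonneg.mpr (Real.sqrt_sub_one_le_sqrt i)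
    exact (Real.le_sqrt hnonneg (Nat.cast_nonneg _)).mp hle
  · rw [Real.sum_Icc_sqrt_sub_sqrt_sub_one, Real.sq_sqrt (Nat.cast_nonneg _), Nat.card_Icc,
      Nat.add_sub_cancel]

/-- Tightness of the L1–L2 norm relation: for `xᵢ = √i − √(i−1)`, every nonempty subset
`A ⊆ {1,…,n}` satisfies `(∑_{i∈A} xᵢ)² ≤ |A|`, and equality `(∑_{i=1}^d xᵢ)² = d` holds
for the initial segments `A = {1,…,d}`; hence the maximum of `(1/|A|)(∑_{i∈A} xᵢ)²` over
nonempty subsets equals `1`. -/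
theorem prefix_sqrt_vector_max_ratio (n : ℕ) (hn : 1 ≤ n) (x : ℕ → ℝ)
    (hx : ∀ i, x i = Real.sqrt i - Real.sqrt ((i : ℝ) - 1)) :
    (∀ A : Finset ℕ, A.Nonempty → A ⊆ Finset.Icc 1 n →
      (∑ i ∈ A, x i) ^ 2 ≤ (A.card : ℝ)) ∧
    (∀ d, 1 ≤ d → d ≤ n →
      (∑ i ∈ Finset.Icc 1 d, x i) ^ 2 = ((Finset.Icc 1 d).card : ℝ)) :=
  prefix_sqrt_vector_max_ratio_general n x hx
end
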